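/- arXiv:1308.5450 — 7 statements merged into one kernel-verified Lean document; each statement's English description precedes it below -/
import Mathlib

section
/- Let H and S be disjoint subgraphs of a graph G, and let α, β ≥ 0 be integers such that either α + 3β ≤ 9 or (α, β) = (1,3). Suppose H is configurable and S is either a path of length at least two or an (α,β)-star with α + β ≥ 3. If every vertex of S of degree one in S is adjacent in G to some vertex of H, then the subgraph of G induced by V(H) ∪ V(S) is configurable. -/
open SimpleGraph

/-- `f` is a configuration on `G`. -/
def IsConfig {V : Type*} (G : SimpleGraph V) (f : V → Finset (Fin 5)) : Prop :=
  (∀ v, (f v).card = 2) ∧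
  ∀ (v : V) (c : Fin 5), ∃ u, (u = v ∨ G.Adj u v) ∧ c ∈ f u

/-- A graph is configurable if it admits a configuration. -/
def Configurable {V : Type*} (G : SimpleGraph V) : Prop :=
  ∃ f : V → Finset (Fin 5), IsConfig G f

/-- The `(α,β)`-star: a center `w = Sum.inl ()`, leaves `x i = Sum.inr (Sum.inl i)`,
and paths `w — y j — z j` where `y j = Sum.inr (Sum.inr (Sum.inl j))` and
`z j = Sum.inr (Sum.inr (Sum.inr j))`. -/
def starGraph (α β : ℕ) : SimpleGraph (Unit ⊕ Fin α ⊕ Fin β ⊕ Fin β) :=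
  SimpleGraph.fromEdgeSet
    ({e | ∃ i : Fin α, e = s(Sum.inl (), Sum.inr (Sum.inl i))} ∪
     {e | ∃ j : Fin β, e = s(Sum.inl (), Sum.inr (Sum.inr (Sum.inl j)))} ∪
     {e | ∃ j : Fin β, e = s(Sum.inr (Sum.inr (Sum.inl j)), Sum.inr (Sum.inr (Sum.inr j)))})

/-!
Colour `H` by a configuration and extend it to `S`, letting each leaf of `S` use the two colours
of a neighbour in `H`. On a path on `n` vertices, the pairs `{σ (2i), σ (2i+1)}` (indices mod 5)
cover every three consecutive vertices, and the two end pairs miss only `σ 4` and `σ (2n)`.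
Choosing `σ` to send these into the outside pairs works unless `2n ≡ 4`, i.e. `n ≡ 2 (mod 5)`.
In that case a solution on `n - 3` vertices is extended by repeating its last three pairs. On a
star the centre gets a pair `fw` that differs from the pairs seen by the leaves `x i` and meets
the pairs seen by the ends `z j`. Each `z j` excludes three of the ten pairs, so such an `fw`
exists when `α + 3β ≤ 9`, and a pigeonhole argument handles `(α, β) = (1, 3)`. Without legs and
with a colour common to all leaves, `fw` is instead chosen disjoint from one leaf pair. The
neighbours of the centre then get `fwᶜ` minus one colour, not always the same one.
-/

namespace SimpleGraph

variable {V W : Type*}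

/-- `D v` is the set of colours that `v` already sees from outside `G`. -/
def IsConfigGiven (G : SimpleGraph V) (D f : V → Finset (Fin 5)) : Prop :=
  (∀ v, (f v).card = 2) ∧ ∀ (v : V) (c : Fin 5), c ∈ D v ∨ ∃ u, (u = v ∨ G.Adj u v) ∧ c ∈ f u

def LeafExtendable (G : SimpleGraph V) : Prop :=
  ∀ D : V → Finset (Fin 5), (∀ v, (G.neighborSet v).ncard = 1 → (D v).card = 2) →
    ∃ f, G.IsConfigGiven D f

theorem Iso.ncard_neighborSet {G : SimpleGraph V} {G' : SimpleGraph W} (e : G ≃g G') (v : V) :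
    (G'.neighborSet (e v)).ncard = (G.neighborSet v).ncard := by
  rw [← Nat.card_coe_set_eq, ← Nat.card_coe_set_eq, Nat.card_congr (e.mapNeighborSet v)]

theorem LeafExtendable.of_iso {G : SimpleGraph V} {G' : SimpleGraph W} (e : G ≃g G')
    (h : G'.LeafExtendable) : G.LeafExtendable := by
  intro D hD
  obtain ⟨f, hf_card, hf_cover⟩ := h (D ∘ e.symm) fun w hw => hD _ <| by
    rwa [← e.ncard_neighborSet, RelIso.apply_symm_apply]
  refine ⟨f ∘ e, fun v => hf_card _, fun v c => ?_⟩
  obtain hc | ⟨u, hu, hc⟩ := hf_cover (e v) c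
  · exact .inl (by simpa using hc)
  · refine .inr ⟨e.symm u, ?_, by simpa using hc⟩
    rcases hu with rfl | hu
    · exact .inl (e.symm_apply_apply v)
    · exact .inr (by rwa [← e.map_rel_iff, RelIso.apply_symm_apply])

theorem Subgraph.ncard_coe_neighborSet {G : SimpleGraph V} (S : G.Subgraph) (v : S.verts) :
    (S.coe.neighborSet v).ncard = (S.neighborSet v).ncard := by
  rw [← Nat.card_coe_set_eq, ← Nat.card_coe_set_eq,
    Nat.card_congr (Subgraph.coeNeighborSetEquiv v)]

theorem configurable_induce_union {G : SimpleGraph V} {H S : G.Subgraph}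
    (hdisj : Disjoint H.verts S.verts) (hH : Configurable H.coe) (hS : S.coe.LeafExtendable)
    (hleaf : ∀ v ∈ S.verts, (S.neighborSet v).ncard = 1 → ∃ u ∈ H.verts, G.Adj v u) :
    Configurable (G.induce (H.verts ∪ S.verts)) := by
  classical
  obtain ⟨f, hf_card, hf_cover⟩ := hH
  have hanchor (v : S.verts) (hv : (S.coe.neighborSet v).ncard = 1) :
      ∃ u : H.verts, G.Adj v u := by
    obtain ⟨u, hu, hvu⟩ := hleaf v v.2 (S.ncard_coe_neighborSet v ▸ hv)
    exact ⟨⟨u, hu⟩, hvu⟩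
  choose a ha using hanchor
  obtain ⟨g, hg_card, hg_cover⟩ :=
    hS (fun v => if h : _ then f (a v h) else ∅) fun v hv => by simp [hv, hf_card]
  have hS_notMem (v : V) (hv : v ∈ S.verts) : v ∉ H.verts := fun h => hdisj.notMem_of_mem_left h hv
  set F : ↥(H.verts ∪ S.verts) → Finset (Fin 5) := fun v =>
    if h : v.1 ∈ H.verts then f ⟨v, h⟩ else g ⟨v, v.2.resolve_left h⟩ with hF
  have hF_H (u : H.verts) : F ⟨u, .inl u.2⟩ = f u := dif_pos u.2
  have hF_S (u : S.verts) : F ⟨u, .inr u.2⟩ = g u := dif_neg (hS_notMem u u.2)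
  refine ⟨F, fun v => ?_, fun v c => ?_⟩
  · by_cases h : v.1 ∈ H.verts
    · simp [hF, h, hf_card]
    · simp [hF, h, hg_card]
  by_cases hv : v.1 ∈ H.verts
  · obtain ⟨u, hu, hc⟩ := hf_cover ⟨v, hv⟩ c
    refine ⟨⟨u, .inl u.2⟩, ?_, by rwa [hF_H]⟩
    rcases hu with rfl | hu
    · exact .inl rfl
    · exact .inr (H.adj_sub hu)
  · have hvS : v.1 ∈ S.verts := v.2.resolve_left hv
    rcases hg_cover ⟨v, hvS⟩ c with hc | ⟨u, hu, hc⟩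
    · dsimp only at hc
      split_ifs at hc with hleaf_v
      · exact ⟨⟨a _ hleaf_v, .inl (a _ hleaf_v).2⟩, .inr (ha _ hleaf_v).symm, by rwa [hF_H]⟩
      · simp at hc
    · refine ⟨⟨u, .inr u.2⟩, ?_, by rwa [hF_S]⟩
      rcases hu with rfl | hu
      · exact .inl rfl
      · exact .inr (S.adj_sub hu)

end SimpleGraph

open Finset Fin.NatCast

theorem Equiv.Perm.exists_apply_eq_and_apply_eq {α : Type*} [DecidableEq α] {a b p q : α}
    (hab : a ≠ b) (hpq : p ≠ q) : ∃ σ : Equiv.Perm α, σ a = p ∧ σ b = q := by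
  refine ⟨Equiv.swap a p |>.trans (Equiv.swap (Equiv.swap a p b) q), ?_, ?_⟩
  · have : p ≠ Equiv.swap a p b := by
      simpa using (Equiv.swap a p).injective.ne hab
    simp [Equiv.swap_apply_of_ne_of_ne this hpq]
  · simp

theorem Finset.exists_mem_notMem_of_card_le_of_ne {ι : Type*} {s t : Finset ι}
    (hcard : t.card ≤ s.card) (h : t ≠ s) : ∃ a ∈ s, a ∉ t := by
  by_contra! hst
  exact h (eq_of_subset_of_card_le hst hcard).symm

/-- `g i` is the pair of colours on the `i`-th vertex of a path on `n` vertices whose two ends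
see `P₀` and `P₁` from outside the path. -/
def IsPathConfig (n : ℕ) (P₀ P₁ : Finset (Fin 5)) (g : ℕ → Finset (Fin 5)) : Prop :=
  (∀ i, (g i).card = 2) ∧ g 0 ∪ g 1 ∪ P₀ = univ ∧
  (∀ i, i + 2 < n → g i ∪ g (i + 1) ∪ g (i + 2) = univ) ∧ g (n - 2) ∪ g (n - 1) ∪ P₁ = univ

/-- The indices `2 * i` and `2 * i + 1` are taken mod 5. -/
def permPairs (σ : Equiv.Perm (Fin 5)) (i : ℕ) : Finset (Fin 5) := {σ (2 * i), σ (2 * i + 1)}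

theorem permPairs_card (σ : Equiv.Perm (Fin 5)) (i : ℕ) : (permPairs σ i).card = 2 :=
  card_pair <| σ.injective.ne <| by generalize (i : Fin 5) = x; fin_cases x <;> decide

theorem permPairs_union_eq_univ (σ : Equiv.Perm (Fin 5)) (i : ℕ) {P : Finset (Fin 5)}
    (h : σ (2 * i + 4) ∈ P) : permPairs σ i ∪ permPairs σ (i + 1) ∪ P = univ := by
  refine eq_univ_of_forall fun c => ?_
  obtain ⟨k, rfl⟩ : ∃ k, c = σ (2 * i + k) := ⟨σ.symm c - 2 * i, by simp⟩
  simp only [permPairs, Nat.cast_add, Nat.cast_one, mul_add, mul_one, add_assoc, mem_union,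
    mem_insert, mem_singleton, σ.injective.eq_iff, add_right_inj]
  fin_cases k <;> simp_all

theorem isPathConfig_permPairs (σ : Equiv.Perm (Fin 5)) {n : ℕ} (hn : 2 ≤ n)
    {P₀ P₁ : Finset (Fin 5)} (h₀ : σ 4 ∈ P₀) (h₁ : σ (2 * n) ∈ P₁) :
    IsPathConfig n P₀ P₁ (permPairs σ) := by
  refine ⟨permPairs_card σ, ?_, fun i _ => permPairs_union_eq_univ σ i ?_, ?_⟩
  · simpa using permPairs_union_eq_univ σ 0 (by simpa using h₀)
  · simp [permPairs, mul_add, add_assoc]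
  · obtain ⟨m, rfl⟩ : ∃ m, n = m + 2 := ⟨n - 2, by omega⟩
    refine permPairs_union_eq_univ σ m ?_
    simpa [mul_add, add_assoc] using h₁

theorem IsPathConfig.extend_three {n : ℕ} {P₀ P₁ : Finset (Fin 5)} {g : ℕ → Finset (Fin 5)}
    (hn : 3 ≤ n) (h : IsPathConfig n P₀ P₁ g) :
    IsPathConfig (n + 3) P₀ P₁ fun i => g (if i < n then i else i - 3) := by
  obtain ⟨m, rfl⟩ : ∃ m, n = m + 3 := ⟨n - 3, by omega⟩
  obtain ⟨h_card, h_start, h_mid, h_end⟩ := h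
  have h_last : g m ∪ g (m + 1) ∪ g (m + 2) = univ := h_mid m (by omega)
  refine ⟨fun i => h_card _, by simpa using h_start, fun i hi => ?_, by simpa using h_end⟩
  rcases (by omega : i + 2 < m + 3 ∨ i = m + 1 ∨ i = m + 2 ∨ i = m + 3) with hi | rfl | rfl | rfl
  · simpa [hi, show i < m + 3 by omega, show i + 1 < m + 3 by omega] using h_mid i hi
  all_goals
    simp only [add_assoc, Nat.reduceAdd, add_lt_add_iff_left, Nat.lt_irrefl, Nat.reduceLT,
      if_true, if_false, Nat.add_sub_assoc, Nat.reduceLeDiff, Nat.reduceSub, add_zero]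
  · rw [← h_last]; ac_rfl
  · rw [← h_last]; ac_rfl
  · exact h_last

theorem exists_isPathConfig {n : ℕ} (hn : 3 ≤ n) {P₀ P₁ : Finset (Fin 5)} (hP₀ : P₀.card = 2)
    (hP₁ : P₁.card = 2) : ∃ g, IsPathConfig n P₀ P₁ g := by
  induction n using Nat.strong_induction_on with
  | _ n ih =>
  by_cases h2 : n % 5 = 2
  · obtain ⟨g, hg⟩ := ih (n - 3) (by omega) (by omega)
    have := hg.extend_three (by omega)
    rw [show n - 3 + 3 = n by omega] at this
    exact ⟨_, this⟩
  obtain ⟨p₁, hp₁⟩ := card_pos.mp (by rw [hP₁]; omega)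
  obtain ⟨p₀, hp₀, hp⟩ := P₀.exists_mem_ne (by omega) p₁
  have h4 : (4 : Fin 5) ≠ 2 * n := by
    simp only [ne_eq, Fin.ext_iff, Fin.val_mul, Fin.val_natCast]; omega
  obtain ⟨σ, hσ₀, hσ₁⟩ := Equiv.Perm.exists_apply_eq_and_apply_eq h4 hp
  exact ⟨_, isPathConfig_permPairs σ (by omega) (hσ₀ ▸ hp₀) (hσ₁ ▸ hp₁)⟩

theorem IsPathConfig.exists_mem {n : ℕ} {P₀ P₁ : Finset (Fin 5)} {g : ℕ → Finset (Fin 5)}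
    (h : IsPathConfig n P₀ P₁ g) (hn : 2 ≤ n) {i : ℕ} (hi : i < n) (c : Fin 5) :
    (i = 0 ∧ c ∈ P₀) ∨ (i = n - 1 ∧ c ∈ P₁) ∨
      ∃ j < n, (j = i ∨ j + 1 = i ∨ i + 1 = j) ∧ c ∈ g j := by
  obtain ⟨-, h_start, h_mid, h_end⟩ := h
  have hc (s t u : Finset (Fin 5)) (h : s ∪ t ∪ u = univ) : (c ∈ s ∨ c ∈ t) ∨ c ∈ u := by
    rw [← mem_union, ← mem_union, h]; exact mem_univ c
  by_cases h0 : i = 0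
  · subst i
    rcases hc _ _ _ h_start with (hc | hc) | hc
    exacts [.inr (.inr ⟨0, hi, .inl rfl, hc⟩), .inr (.inr ⟨1, hn, .inr (.inr rfl), hc⟩),
      .inl ⟨rfl, hc⟩]
  by_cases hlast : i = n - 1
  · subst i
    rcases hc _ _ _ h_end with (hc | hc) | hc
    exacts [.inr (.inr ⟨n - 2, by omega, .inr (.inl (by omega)), hc⟩),
      .inr (.inr ⟨n - 1, hi, .inl rfl, hc⟩), .inr (.inl ⟨rfl, hc⟩)]
  have h_mid := h_mid (i - 1) (by omega)
  rw [show i - 1 + 1 = i by omega, show i - 1 + 2 = i + 1 by omega] at h_mid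
  rcases hc _ _ _ h_mid with (hc | hc) | hc
  exacts [.inr (.inr ⟨i - 1, by omega, .inr (.inl (by omega)), hc⟩),
    .inr (.inr ⟨i, hi, .inl rfl, hc⟩), .inr (.inr ⟨i + 1, by omega, .inr (.inr rfl), hc⟩)]

theorem pathGraph_neighborSet_zero {n : ℕ} (hn : 2 ≤ n) :
    (pathGraph n).neighborSet ⟨0, by omega⟩ = {⟨1, by omega⟩} := by
  ext u
  simp only [mem_neighborSet, pathGraph_adj, Set.mem_singleton_iff, Fin.ext_iff]
  omega

theorem pathGraph_neighborSet_last {n : ℕ} (hn : 2 ≤ n) :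
    (pathGraph n).neighborSet ⟨n - 1, by omega⟩ = {⟨n - 2, by omega⟩} := by
  ext u
  simp only [mem_neighborSet, pathGraph_adj, Set.mem_singleton_iff, Fin.ext_iff]
  omega

theorem pathGraph_leafExtendable {n : ℕ} (hn : 3 ≤ n) : (pathGraph n).LeafExtendable := by
  intro D hD
  have hD₀ := hD _ (by rw [pathGraph_neighborSet_zero (by omega), Set.ncard_singleton])
  have hD₁ := hD _ (by rw [pathGraph_neighborSet_last (by omega), Set.ncard_singleton])
  obtain ⟨g, hg⟩ := exists_isPathConfig hn hD₀ hD₁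
  refine ⟨fun i => g i, fun i => hg.1 i, fun i c => ?_⟩
  rcases hg.exists_mem (by omega) i.2 c with ⟨hi, hc⟩ | ⟨hi, hc⟩ | ⟨j, hj, hji, hc⟩
  · exact .inl (by rwa [show i = ⟨0, by omega⟩ from Fin.ext hi])
  · exact .inl (by rwa [show i = ⟨n - 1, by omega⟩ from Fin.ext hi])
  · refine .inr ⟨⟨j, hj⟩, ?_, hc⟩
    rw [pathGraph_adj, Fin.ext_iff]
    omega

section Star

variable {α β : ℕ}

theorem starGraph_adj_inl_inl (i : Fin α) :
    (starGraph α β).Adj (.inl ()) (.inr (.inl i)) := by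
  rw [_root_.starGraph, fromEdgeSet_adj]
  exact ⟨.inl (.inl ⟨i, rfl⟩), by simp⟩

theorem starGraph_adj_inl_inr_inl (j : Fin β) :
    (starGraph α β).Adj (.inl ()) (.inr (.inr (.inl j))) := by
  rw [_root_.starGraph, fromEdgeSet_adj]
  exact ⟨.inl (.inr ⟨j, rfl⟩), by simp⟩

theorem starGraph_adj_inr_inl_inr_inr (j : Fin β) :
    (starGraph α β).Adj (.inr (.inr (.inl j))) (.inr (.inr (.inr j))) := by
  rw [_root_.starGraph, fromEdgeSet_adj]
  exact ⟨.inr ⟨j, rfl⟩, by simp⟩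

theorem starGraph_neighborSet_inr_inl (i : Fin α) :
    (starGraph α β).neighborSet (.inr (.inl i)) = {.inl ()} := by
  ext u
  simp only [mem_neighborSet, Set.mem_singleton_iff, _root_.starGraph, fromEdgeSet_adj,
    Set.mem_union, Set.mem_ofPred_eq, Sym2.eq_iff]
  constructor
  · rintro ⟨(⟨i', h⟩ | ⟨j, h⟩) | ⟨j, h⟩, hne⟩ <;> simp_all
  · rintro rfl
    exact ⟨.inl (.inl ⟨i, .inr ⟨rfl, rfl⟩⟩), by simp⟩

theorem starGraph_neighborSet_inr_inr_inr (j : Fin β) :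
    (starGraph α β).neighborSet (.inr (.inr (.inr j))) = {.inr (.inr (.inl j))} := by
  ext u
  simp only [mem_neighborSet, Set.mem_singleton_iff, _root_.starGraph, fromEdgeSet_adj,
    Set.mem_union, Set.mem_ofPred_eq, Sym2.eq_iff]
  constructor
  · rintro ⟨(⟨i, h⟩ | ⟨j', h⟩) | ⟨j', h⟩, hne⟩ <;> simp_all
  · rintro rfl
    exact ⟨.inr ⟨j, .inr ⟨rfl, rfl⟩⟩, by simp⟩

/-- A configuration recipe for the `(α,β)`-star whose leaves `x i`, `z j` see `P i`, `Q j` from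
outside: the centre gets `fw`, while `x i` and `y j` get `fwᶜ` minus `o i` and `o' j`. -/
def IsStarPlan (P : Fin α → Finset (Fin 5)) (Q : Fin β → Finset (Fin 5))
    (fw : Finset (Fin 5)) (o : Fin α → Fin 5) (o' : Fin β → Fin 5) : Prop :=
  fw.card = 2 ∧ (∀ j, (fw ∩ Q j).Nonempty) ∧ (∀ i, o i ∈ P i ∧ o i ∉ fw) ∧ (∀ j, o' j ∉ fw) ∧
    ∀ c ∉ fw, (∃ i, o i ≠ c) ∨ ∃ j, o' j ≠ c

theorem IsStarPlan.exists_isConfigGiven {D : Unit ⊕ Fin α ⊕ Fin β ⊕ Fin β → Finset (Fin 5)}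
    {fw : Finset (Fin 5)} {o : Fin α → Fin 5} {o' : Fin β → Fin 5}
    (h : IsStarPlan (fun i => D (.inr (.inl i))) (fun j => D (.inr (.inr (.inr j)))) fw o o') :
    ∃ f, (starGraph α β).IsConfigGiven D f := by
  obtain ⟨hfw, hQ, ho, ho', h_centre⟩ := h
  choose q hq using hQ
  simp only [mem_inter] at hq
  have h_compl (a : Fin 5) (ha : a ∉ fw) : (fwᶜ.erase a).card = 2 := by
    rw [card_erase_of_mem (mem_compl.mpr ha), card_compl, hfw]; rfl
  refine ⟨Sum.elim (fun _ => fw) <| Sum.elim (fun i => fwᶜ.erase (o i)) <|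
    Sum.elim (fun j => fwᶜ.erase (o' j)) fun j => insert (o' j) (fw.erase (q j)), ?_, ?_⟩
  · rintro (_ | i | j | j) <;> simp only [Sum.elim_inl, Sum.elim_inr]
    · exact hfw
    · exact h_compl _ (ho i).2
    · exact h_compl _ (ho' j)
    · rw [card_insert_of_notMem (fun h => ho' j (mem_of_mem_erase h)),
        card_erase_of_mem (hq j).1, hfw]
  rintro (_ | i | j | j) c
  · by_cases hc : c ∈ fw
    · exact .inr ⟨.inl (), .inl rfl, hc⟩
    rcases h_centre c hc with ⟨i, hi⟩ | ⟨j, hj⟩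
    · exact .inr ⟨.inr (.inl i), .inr (starGraph_adj_inl_inl i).symm, by simp [hc, Ne.symm hi]⟩
    · exact .inr ⟨.inr (.inr (.inl j)), .inr (starGraph_adj_inl_inr_inl j).symm,
        by simp [hc, Ne.symm hj]⟩
  · by_cases hc : c ∈ fw
    · exact .inr ⟨.inl (), .inr (starGraph_adj_inl_inl i), hc⟩
    by_cases hci : c = o i
    · exact .inl (hci ▸ (ho i).1)
    · exact .inr ⟨.inr (.inl i), .inl rfl, by simp [hc, hci]⟩
  · by_cases hc : c ∈ fw
    · exact .inr ⟨.inl (), .inr (starGraph_adj_inl_inr_inl j), hc⟩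
    by_cases hcj : c = o' j
    · exact .inr ⟨.inr (.inr (.inr j)), .inr (starGraph_adj_inr_inl_inr_inr j).symm, by simp [hcj]⟩
    · exact .inr ⟨.inr (.inr (.inl j)), .inl rfl, by simp [hc, hcj]⟩
  · by_cases hcj : c = o' j
    · exact .inr ⟨.inr (.inr (.inr j)), .inl rfl, by simp [hcj]⟩
    by_cases hc : c ∈ fw
    · by_cases hcq : c = q j
      · exact .inl (hcq ▸ (hq j).2)
      · exact .inr ⟨.inr (.inr (.inr j)), .inl rfl, by simp [hc, hcq]⟩
    · exact .inr ⟨.inr (.inr (.inl j)), .inr (starGraph_adj_inr_inl_inr_inr j),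
        by simp [hc, hcj]⟩

theorem exists_pair_ne_and_inter_nonempty (P : Fin α → Finset (Fin 5))
    (Q : Fin β → Finset (Fin 5)) (hQ : ∀ j, (Q j).card = 2) (h : α + 3 * β ≤ 9) :
    ∃ fw : Finset (Fin 5), fw.card = 2 ∧ (∀ i, fw ≠ P i) ∧ ∀ j, (fw ∩ Q j).Nonempty := by
  -- At most `α + 3 * β` of the ten pairs are excluded: the `P i`, and the three pairs inside
  -- each `(Q j)ᶜ`.
  have h_bad : (univ.image P ∪ univ.biUnion fun j => (Q j)ᶜ.powersetCard 2).card <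
      (univ.powersetCard 2 : Finset (Finset (Fin 5))).card := calc
    _ ≤ α + ∑ j : Fin β, 3 := by
      refine (card_union_le _ _).trans (add_le_add (card_image_le.trans (by simp)) ?_)
      exact card_biUnion_le.trans (sum_le_sum fun j _ => by simp [card_compl, hQ])
    _ < 10 := by simp; omega
    _ = _ := by simp; rfl
  obtain ⟨fw, hfw, hbad⟩ := exists_mem_notMem_of_card_lt_card h_bad
  simp only [mem_powersetCard, subset_univ, true_and] at hfw
  simp only [mem_union, mem_image, mem_univ, true_and, mem_biUnion, mem_powersetCard, hfw,
    and_true, not_or, not_exists, subset_compl_iff_disjoint_right] at hbad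
  exact ⟨fw, hfw, fun i h => hbad.1 i h.symm,
    fun j => not_disjoint_iff_nonempty_inter.mp (hbad.2 j)⟩

theorem exists_pair_mem_ne_and_inter_nonempty (c : Fin 5) {P Q : Finset (Fin 5)}
    (hP : P.card = 2) (hQ : Q.card = 2) :
    ∃ fw : Finset (Fin 5), fw.card = 2 ∧ c ∈ fw ∧ fw ≠ P ∧ (fw ∩ Q).Nonempty := by
  by_cases hcQ : c ∈ Q
  · obtain ⟨y, hy⟩ : ((insert c P)ᶜ).Nonempty := by
      rw [← card_pos, card_compl]
      have := card_insert_le c P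
      simp only [Fintype.card_fin]
      omega
    simp only [mem_compl, mem_insert, not_or] at hy
    exact ⟨{c, y}, card_pair (Ne.symm hy.1), by simp, fun h => hy.2 (h ▸ by simp),
      ⟨c, by simp [hcQ]⟩⟩
  · obtain ⟨d, e, hde, rfl⟩ := card_eq_two.mp hQ
    have hcd : c ≠ d := by rintro rfl; simp at hcQ
    have hce : c ≠ e := by rintro rfl; simp at hcQ
    by_cases hd : {c, d} = P
    · refine ⟨{c, e}, card_pair hce, by simp, fun he => ?_, ⟨e, by simp⟩⟩
      have : e ∈ ({c, d} : Finset (Fin 5)) := hd ▸ he ▸ by simp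
      simp [hce.symm, hde.symm] at this
    · exact ⟨{c, d}, card_pair hcd, by simp, hd, ⟨d, by simp⟩⟩

theorem exists_pair_ne_and_inter_nonempty_three {P : Finset (Fin 5)} (hP : P.card = 2)
    (Q : Fin 3 → Finset (Fin 5)) (hQ : ∀ j, (Q j).card = 2) :
    ∃ fw : Finset (Fin 5), fw.card = 2 ∧ fw ≠ P ∧ ∀ j, (fw ∩ Q j).Nonempty := by
  obtain ⟨c, j₁, j₂, hj, hc₁, hc₂⟩ : ∃ c, ∃ j₁ j₂, j₁ ≠ j₂ ∧ c ∈ Q j₁ ∧ c ∈ Q j₂ := by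
    by_contra! h
    have h_card : (univ.biUnion Q).card = 6 := by
      rw [card_biUnion fun j₁ _ j₂ _ hj => disjoint_left.mpr fun c => h c j₁ j₂ hj]
      simp [hQ]
    exact absurd (h_card ▸ card_le_univ _) (by simp)
  obtain ⟨k, hk₁, hk₂⟩ : ∃ k, k ≠ j₁ ∧ k ≠ j₂ := by
    have : ∀ a b : Fin 3, ∃ k, k ≠ a ∧ k ≠ b := by decide
    exact this j₁ j₂
  obtain ⟨fw, hfw, hc, hfwP, hfwQ⟩ := exists_pair_mem_ne_and_inter_nonempty c hP (hQ k)
  refine ⟨fw, hfw, hfwP, fun j => ?_⟩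
  obtain rfl | rfl | rfl : j = j₁ ∨ j = j₂ ∨ j = k := by omega
  exacts [⟨c, mem_inter.mpr ⟨hc, hc₁⟩⟩, ⟨c, mem_inter.mpr ⟨hc, hc₂⟩⟩, hfwQ]

theorem exists_isStarPlan_of_mem_all (P : Fin α → Finset (Fin 5)) (Q : Fin 0 → Finset (Fin 5))
    (hP : ∀ i, (P i).card = 2) (hα : 2 ≤ α) {s : Fin 5} (hs : ∀ i, s ∈ P i) :
    ∃ fw o o', IsStarPlan P Q fw o o' := by
  let i₀ : Fin α := ⟨0, by omega⟩
  let i₁ : Fin α := ⟨1, by omega⟩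
  obtain ⟨t, ht, hts⟩ := (P i₀).exists_mem_ne (by rw [hP]; omega) s
  obtain ⟨fw, hfw, hfw_card⟩ := exists_subset_card_eq (s := ({s, t} : Finset (Fin 5))ᶜ) (n := 2)
    (by rw [card_compl, card_pair hts.symm]; simp)
  have hs_fw : s ∉ fw := fun h => by simpa using hfw h
  have ht_fw : t ∉ fw := fun h => by simpa using hfw h
  refine ⟨fw, fun i => if i = i₀ then t else s, Fin.elim0, hfw_card, fun j => j.elim0, fun i => ?_,
    fun j => j.elim0, fun c _ => .inl ?_⟩
  · dsimp only
    split_ifs with h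
    exacts [⟨h ▸ ht, ht_fw⟩, ⟨hs i, hs_fw⟩]
  · by_cases hc : c = s
    · exact ⟨i₀, by simp [hc, hts]⟩
    · exact ⟨i₁, by simp [i₀, i₁, Fin.ext_iff, Ne.symm hc]⟩

theorem exists_isStarPlan_of_pair {P : Fin α → Finset (Fin 5)} {Q : Fin β → Finset (Fin 5)}
    (hP : ∀ i, (P i).card = 2) {fw : Finset (Fin 5)} (hfw : fw.card = 2) (hfwP : ∀ i, fw ≠ P i)
    (hfwQ : ∀ j, (fw ∩ Q j).Nonempty)
    (h : (∀ c, ∃ i, c ∉ P i) ∨ (0 < β ∧ 2 ≤ α + β)) :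
    ∃ o o', IsStarPlan P Q fw o o' := by
  choose o ho hofw using fun i =>
    exists_mem_notMem_of_card_le_of_ne (hfw.trans (hP i).symm).le (hfwP i)
  -- Two colours outside `fw`, where `a` also differs from the colour omitted at `x 0` (if any).
  obtain ⟨a, ha, b, hb, hab⟩ := one_lt_card.mp <| show 1 < (fwᶜ.erase
    (if h : 0 < α then o ⟨0, h⟩ else 0)).card by
      rw [card_erase_eq_ite, card_compl, hfw]; split_ifs <;> simp
  simp only [mem_erase, mem_compl] at ha hb
  refine ⟨o, fun j => if (j : ℕ) = 0 then a else b, ⟨hfw, hfwQ, fun i => ⟨ho i, hofw i⟩,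
    fun j => ?_, fun c hc => ?_⟩⟩
  · dsimp only
    split_ifs
    exacts [ha.2, hb.2]
  rcases h with h | ⟨hβ, h2⟩
  · obtain ⟨i, hi⟩ := h c
    exact .inl ⟨i, fun h => hi (h ▸ ho i)⟩
  by_cases hca : c = a
  · subst c
    by_cases hβ2 : 2 ≤ β
    · exact .inr ⟨⟨1, hβ2⟩, by simp [Ne.symm hab]⟩
    · refine .inl ⟨⟨0, by omega⟩, fun h => ha.1 ?_⟩
      rw [dif_pos (by omega), h]
  · exact .inr ⟨⟨0, hβ⟩, by simp [Ne.symm hca]⟩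

theorem exists_isStarPlan {P : Fin α → Finset (Fin 5)} {Q : Fin β → Finset (Fin 5)}
    (hP : ∀ i, (P i).card = 2) (hQ : ∀ j, (Q j).card = 2)
    (hαβ : α + 3 * β ≤ 9 ∨ (α = 1 ∧ β = 3)) (h2 : 2 ≤ α + β) :
    ∃ fw o o', IsStarPlan P Q fw o o' := by
  obtain rfl | hβ := Nat.eq_zero_or_pos β
  · by_cases hs : ∃ s, ∀ i, s ∈ P i
    · obtain ⟨s, hs⟩ := hs
      exact exists_isStarPlan_of_mem_all P Q hP h2 hs
    simp only [not_exists, not_forall] at hs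
    obtain ⟨fw, hfw, hfwP, hfwQ⟩ := exists_pair_ne_and_inter_nonempty P Q hQ (by omega)
    exact ⟨fw, exists_isStarPlan_of_pair hP hfw hfwP hfwQ (.inl hs)⟩
  obtain ⟨fw, hfw, hfwP, hfwQ⟩ :
      ∃ fw : Finset (Fin 5), fw.card = 2 ∧ (∀ i, fw ≠ P i) ∧ ∀ j, (fw ∩ Q j).Nonempty := by
    rcases hαβ with h | ⟨rfl, rfl⟩
    · exact exists_pair_ne_and_inter_nonempty P Q hQ h
    · obtain ⟨fw, hfw, hfwP, hfwQ⟩ := exists_pair_ne_and_inter_nonempty_three (hP 0) Q hQ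
      exact ⟨fw, hfw, fun i => Subsingleton.elim i 0 ▸ hfwP, hfwQ⟩
  exact ⟨fw, exists_isStarPlan_of_pair hP hfw hfwP hfwQ (.inr ⟨hβ, h2⟩)⟩

theorem starGraph_leafExtendable (hαβ : α + 3 * β ≤ 9 ∨ (α = 1 ∧ β = 3))
    (h2 : 2 ≤ α + β) : (starGraph α β).LeafExtendable := by
  intro D hD
  obtain ⟨fw, o, o', h⟩ := exists_isStarPlan
    (fun i => hD _ (by rw [starGraph_neighborSet_inr_inl, Set.ncard_singleton]))
    (fun j => hD _ (by rw [starGraph_neighborSet_inr_inr_inr, Set.ncard_singleton])) hαβ h2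
  exact h.exists_isConfigGiven

end Star

theorem stmt4 {V : Type*} (G : SimpleGraph V) (H S : G.Subgraph)
    (hdisj : Disjoint H.verts S.verts)
    (α β : ℕ) (hαβ : α + 3 * β ≤ 9 ∨ (α = 1 ∧ β = 3))
    (hH : Configurable H.coe)
    (hS : (∃ n, 3 ≤ n ∧ Nonempty (S.coe ≃g pathGraph n)) ∨
          (3 ≤ α + β ∧ Nonempty (S.coe ≃g starGraph α β)))
    (hdeg : ∀ v ∈ S.verts, (S.neighborSet v).ncard = 1 → ∃ u ∈ H.verts, G.Adj v u) :
    Configurable (G.induce (H.verts ∪ S.verts)) := by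
  refine configurable_induce_union hdisj hH ?_ hdeg
  rcases hS with ⟨n, hn, ⟨e⟩⟩ | ⟨h3, ⟨e⟩⟩
  · exact (pathGraph_leafExtendable hn).of_iso e
  · exact (starGraph_leafExtendable hαβ (by omega)).of_iso e
end

section
/- Let G be a graph and let P = x v1 v2 v3 y be a path in G (so x, v1, v2, v3, y are distinct vertices with consecutive vertices adjacent). Define H as follows: if x is adjacent to y in G, let H = G \ {v1, v2, v3}; otherwise let H be the graph obtained from G \ {v1, v2, v3} by adding the edge xy. If H is configurable, then G is configurable. -/
open SimpleGraph

def lo (s : Finset (Fin 5)) : Fin 5 := s.fold min 4 id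
def hi (s : Finset (Fin 5)) : Fin 5 := s.fold max 0 id

def trip (A B : Finset (Fin 5)) : Finset (Fin 5) × Finset (Fin 5) × Finset (Fin 5) :=
  let C := Finset.univ \ (A ∪ B)
  if C.card = 1 then (B, {lo C, lo B}, A)
  else if C.card = 2 then ((B \ A) ∪ {lo C}, (A ∩ B) ∪ {hi C}, (A \ B) ∪ {lo C})
  else ({lo C, lo A}, {lo (C.erase (lo C)), hi C}, {lo C, hi A})

theorem trip_spec : ∀ A B : Finset (Fin 5), A.card = 2 → B.card = 2 →
    ((trip A B).1.card = 2 ∧ (trip A B).2.1.card = 2 ∧ (trip A B).2.2.card = 2 ∧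
     B \ A ⊆ (trip A B).1 ∧ A \ B ⊆ (trip A B).2.2 ∧
     A ∪ (trip A B).1 ∪ (trip A B).2.1 = Finset.univ ∧
     (trip A B).1 ∪ (trip A B).2.1 ∪ (trip A B).2.2 = Finset.univ ∧
     (trip A B).2.1 ∪ (trip A B).2.2 ∪ B = Finset.univ) := by decide

/-- Lemma: suppressing three consecutive internal vertices of degree-two paths.
Here `H = (G ∪ {xy}) \ {v₁,v₂,v₃}`; note that if `x` and `y` are already adjacent
in `G` then adding the edge `xy` changes nothing, so this is exactly
`G \ {v₁,v₂,v₃}` in that case. -/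
theorem stmt5 {V : Type*} (G : SimpleGraph V) (x v1 v2 v3 y : V)
    (hdist : List.Nodup [x, v1, v2, v3, y])
    (h1 : G.Adj x v1) (h2 : G.Adj v1 v2) (h3 : G.Adj v2 v3) (h4 : G.Adj v3 y)
    (hH : Configurable
      ((G ⊔ SimpleGraph.fromEdgeSet {s(x, y)}).induce (({v1, v2, v3} : Set V)ᶜ))) :
    Configurable G := by
  classical
  simp only [List.nodup_cons, List.mem_cons, List.not_mem_nil, or_false,
    List.mem_singleton, List.nodup_nil, and_true, not_or] at hdist
  obtain ⟨⟨hxv1, hxv2, hxv3, hxy⟩, ⟨hv12, hv13, hv1y⟩, ⟨hv23, hv2y⟩, hv3y, _⟩ := hdist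
  obtain ⟨f, hcard, hcov⟩ := hH
  have hx : x ∈ (({v1, v2, v3} : Set V)ᶜ) := by simp [hxv1, hxv2, hxv3]
  have hy : y ∈ (({v1, v2, v3} : Set V)ᶜ) := by
    simp only [Set.mem_compl_iff, Set.mem_insert_iff, Set.mem_singleton_iff, not_or]
    exact ⟨fun h => hv1y h.symm, fun h => hv2y h.symm, fun h => hv3y h.symm⟩
  set A := f ⟨x, hx⟩ with hA
  set B := f ⟨y, hy⟩ with hB
  obtain ⟨tc1, tc2, tc3, ts1, ts3, tu1, tu2, tu3⟩ :=
    trip_spec A B (hcard _) (hcard _)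
  set g : V → Finset (Fin 5) := fun v =>
    if v = v1 then (trip A B).1
    else if v = v2 then (trip A B).2.1
    else if v = v3 then (trip A B).2.2
    else if hv : v ∈ (({v1, v2, v3} : Set V)ᶜ) then f ⟨v, hv⟩ else ∅ with hg
  have hgmem : ∀ (v : V) (hv : v ∈ (({v1, v2, v3} : Set V)ᶜ)), g v = f ⟨v, hv⟩ := by
    intro v hv
    have h1' : v ≠ v1 := by intro h; apply hv; simp [h]
    have h2' : v ≠ v2 := by intro h; apply hv; simp [h]
    have h3' : v ≠ v3 := by intro h; apply hv; simp [h]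
    simp [hg, h1', h2', h3', hv]
  have hg1 : g v1 = (trip A B).1 := by simp [hg]
  have h21 : v2 ≠ v1 := fun h => hv12 h.symm
  have h31 : v3 ≠ v1 := fun h => hv13 h.symm
  have h32 : v3 ≠ v2 := fun h => hv23 h.symm
  have hg2 : g v2 = (trip A B).2.1 := by simp [hg, h21]
  have hg3 : g v3 = (trip A B).2.2 := by simp [hg, h31, h32]
  refine ⟨g, ?_, ?_⟩
  · intro v
    by_cases e1 : v = v1
    · rw [e1, hg1]; exact tc1
    by_cases e2 : v = v2
    · rw [e2, hg2]; exact tc2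
    by_cases e3 : v = v3
    · rw [e3, hg3]; exact tc3
    have hv : v ∈ (({v1, v2, v3} : Set V)ᶜ) := by simp [e1, e2, e3]
    rw [hgmem v hv]; exact hcard _
  · intro v c
    by_cases e1 : v = v1
    · rw [e1]
      have : c ∈ A ∪ (trip A B).1 ∪ (trip A B).2.1 := by rw [tu1]; exact Finset.mem_univ c
      rcases Finset.mem_union.mp this with h | h
      · rcases Finset.mem_union.mp h with h | h
        · exact ⟨x, Or.inr h1, by rw [hgmem x hx]; exact h⟩
        · exact ⟨v1, Or.inl rfl, by rw [hg1]; exact h⟩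
      · exact ⟨v2, Or.inr h2.symm, by rw [hg2]; exact h⟩
    by_cases e2 : v = v2
    · rw [e2]
      have : c ∈ (trip A B).1 ∪ (trip A B).2.1 ∪ (trip A B).2.2 := by
        rw [tu2]; exact Finset.mem_univ c
      rcases Finset.mem_union.mp this with h | h
      · rcases Finset.mem_union.mp h with h | h
        · exact ⟨v1, Or.inr h2, by rw [hg1]; exact h⟩
        · exact ⟨v2, Or.inl rfl, by rw [hg2]; exact h⟩
      · exact ⟨v3, Or.inr h3.symm, by rw [hg3]; exact h⟩
    by_cases e3 : v = v3
    · rw [e3]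
      have : c ∈ (trip A B).2.1 ∪ (trip A B).2.2 ∪ B := by
        rw [tu3]; exact Finset.mem_univ c
      rcases Finset.mem_union.mp this with h | h
      · rcases Finset.mem_union.mp h with h | h
        · exact ⟨v2, Or.inr h3, by rw [hg2]; exact h⟩
        · exact ⟨v3, Or.inl rfl, by rw [hg3]; exact h⟩
      · exact ⟨y, Or.inr h4.symm, by rw [hgmem y hy]; exact h⟩
    have hv : v ∈ (({v1, v2, v3} : Set V)ᶜ) := by simp [e1, e2, e3]
    obtain ⟨u, hu, hcu⟩ := hcov ⟨v, hv⟩ c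
    rcases hu with hu | hu
    · refine ⟨v, Or.inl rfl, ?_⟩
      rw [hgmem v hv]
      rw [hu] at hcu
      exact hcu
    · -- adjacency in the induced graph
      have hadj : (G ⊔ SimpleGraph.fromEdgeSet {s(x, y)}).Adj (u : V) v := hu
      rcases hadj with hadj | hadj
      · exact ⟨u, Or.inr hadj, by rw [hgmem u u.2]; exact hcu⟩
      · rw [SimpleGraph.fromEdgeSet_adj] at hadj
        obtain ⟨he, hne⟩ := hadj
        rw [Set.mem_singleton_iff, Sym2.eq_iff] at he
        rcases he with ⟨hux, hvy⟩ | ⟨huy, hvx⟩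
        · -- u = x, v = y, c ∈ f x = A
          have hcA : c ∈ A := by
            rw [hA]
            convert hcu using 2
            exact Subtype.ext hux.symm
          by_cases hcB : c ∈ B
          · exact ⟨y, Or.inl hvy.symm, by rw [hgmem y hy]; exact hcB⟩
          · refine ⟨v3, Or.inr (by rw [hvy]; exact h4), ?_⟩
            rw [hg3]
            exact ts3 (Finset.mem_sdiff.mpr ⟨hcA, hcB⟩)
        · -- u = y, v = x, c ∈ f y = B
          have hcB : c ∈ B := by
            rw [hB]
            convert hcu using 2
            exact Subtype.ext huy.symm
          by_cases hcA : c ∈ A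
          · exact ⟨x, Or.inl hvx.symm, by rw [hgmem x hx]; exact hcA⟩
          · refine ⟨v1, Or.inr (by rw [hvx]; exact h1.symm), ?_⟩
            rw [hg1]
            exact ts1 (Finset.mem_sdiff.mpr ⟨hcB, hcA⟩)
end

section
/- Let H be a configurable graph and let f be a configuration on H. If G is obtained from H by either (i) adding a new vertex v and two edges vx and vy, where x and y are vertices of H with f(x) ≠ f(y), or (ii) adding two new vertices u and v and three edges xu, uv, vy, where x and y are vertices of H with f(x) ∩ f(y) ≠ ∅, then f can be extended to a configuration on G (i.e., there is a configuration g on G agreeing with f on V(H)). -/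
open SimpleGraph

/-- The graph obtained from `H` by adding one new vertex `v = Sum.inr ()` together
with the two edges `v x` and `v y`. -/
def addVee {W : Type*} (H : SimpleGraph W) (x y : W) : SimpleGraph (W ⊕ Unit) :=
  SimpleGraph.fromEdgeSet
    ({e | ∃ a b, H.Adj a b ∧ e = s(Sum.inl a, Sum.inl b)} ∪
     {s(Sum.inl x, Sum.inr ()), s(Sum.inl y, Sum.inr ())})

/-- The graph obtained from `H` by adding two new vertices `u = Sum.inr false` and
`v = Sum.inr true` together with the three edges `x u`, `u v`, `v y`. -/
def addPathTwo {W : Type*} (H : SimpleGraph W) (x y : W) : SimpleGraph (W ⊕ Bool) :=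
  SimpleGraph.fromEdgeSet
    ({e | ∃ a b, H.Adj a b ∧ e = s(Sum.inl a, Sum.inl b)} ∪
     {s(Sum.inl x, Sum.inr false), s(Sum.inr false, Sum.inr true), s(Sum.inr true, Sum.inl y)})

open Finset

theorem Finset.card_lt_card_union_of_card_eq_of_ne {α : Type*} [DecidableEq α]
    {s t : Finset α} (hst : #s = #t) (hne : s ≠ t) : #s < #(s ∪ t) := by
  by_contra! hle
  have hunion : s ∪ t = s := (eq_of_subset_of_card_le subset_union_left hle).symm
  have hts : t ⊆ s := hunion ▸ subset_union_right
  exact hne (eq_of_subset_of_card_le hts hst.le).symm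

theorem Finset.exists_card_eq_cover_of_card_le_add {α : Type*} [Fintype α] {s : Finset α}
    {k : ℕ} (hs : Fintype.card α ≤ #s + k) (hk : k ≤ Fintype.card α) :
    ∃ t : Finset α, #t = k ∧ ∀ c, c ∈ s ∨ c ∈ t := by
  classical
  have hcompl : #sᶜ ≤ k := by
    rw [card_compl]
    omega
  obtain ⟨t, hsub, ht⟩ := exists_superset_card_eq hcompl hk
  refine ⟨t, ht, fun c => ?_⟩
  by_cases hc : c ∈ s
  · exact Or.inl hc
  · exact Or.inr (hsub (mem_compl.mpr hc))

theorem Finset.exists_split_of_card_eq_add {α : Type*} [DecidableEq α] {u : Finset α}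
    {m n : ℕ} (hu : #u = m + n) :
    ∃ s t : Finset α, #s = m ∧ #t = n ∧ ∀ d ∈ u, d ∈ s ∨ d ∈ t := by
  obtain ⟨s, hsub, hs⟩ := exists_subset_card_eq (show m ≤ #u by omega)
  refine ⟨s, u \ s, hs, by rw [card_sdiff_of_subset hsub]; omega, fun d hd => ?_⟩
  by_cases hds : d ∈ s
  · exact Or.inl hds
  · exact Or.inr (mem_sdiff.mpr ⟨hd, hds⟩)

section Extension

variable {W : Type*} {H : SimpleGraph W} {f : W → Finset (Fin 5)}

theorem IsConfig.sum_elim {β : Type*} {G : SimpleGraph (W ⊕ β)} {h : β → Finset (Fin 5)}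
    (hf : IsConfig H f) (hHG : H ≤ G.comap Sum.inl) (hcard : ∀ b, #(h b) = 2)
    (hcov : ∀ b c, ∃ u, (u = Sum.inr b ∨ G.Adj u (Sum.inr b)) ∧ c ∈ Sum.elim f h u) :
    IsConfig G (Sum.elim f h) := by
  refine ⟨Sum.rec hf.1 hcard, ?_⟩
  rintro (a | b) c
  · obtain ⟨u, hu, hc⟩ := hf.2 a c
    exact ⟨Sum.inl u, hu.imp (congrArg Sum.inl) (@hHG u a), hc⟩
  · exact hcov b c

variable {x y : W}

theorem le_comap_addVee : H ≤ (addVee H x y).comap Sum.inl := fun a b hab => by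
  simpa [addVee] using ⟨⟨a, b, hab, Or.inl ⟨rfl, rfl⟩⟩, hab.ne⟩

theorem addVee_adj_left : (addVee H x y).Adj (Sum.inl x) (Sum.inr ()) := by
  simp [addVee]

theorem addVee_adj_right : (addVee H x y).Adj (Sum.inl y) (Sum.inr ()) := by
  simp [addVee]

theorem le_comap_addPathTwo : H ≤ (addPathTwo H x y).comap Sum.inl := fun a b hab => by
  simpa [addPathTwo] using ⟨⟨a, b, hab, Or.inl ⟨rfl, rfl⟩⟩, hab.ne⟩

theorem addPathTwo_adj_left : (addPathTwo H x y).Adj (Sum.inl x) (Sum.inr false) := by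
  simp [addPathTwo]

theorem addPathTwo_adj_mid : (addPathTwo H x y).Adj (Sum.inr false) (Sum.inr true) := by
  simp [addPathTwo]

theorem addPathTwo_adj_right : (addPathTwo H x y).Adj (Sum.inr true) (Sum.inl y) := by
  simp [addPathTwo]

/-- Two distinct 2-sets cover at least three colours, so one more 2-set covers the rest. -/
theorem IsConfig.exists_extend_addVee (hf : IsConfig H f) (hxy : f x ≠ f y) :
    ∃ g, IsConfig (addVee H x y) g ∧ ∀ a, g (Sum.inl a) = f a := by
  have hunion : 3 ≤ #(f x ∪ f y) := by
    have := card_lt_card_union_of_card_eq_of_ne ((hf.1 x).trans (hf.1 y).symm) hxy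
    rw [hf.1 x] at this
    omega
  obtain ⟨t, ht, hcover⟩ :=
    exists_card_eq_cover_of_card_le_add (s := f x ∪ f y) (k := 2)
      (by rw [Fintype.card_fin]; omega) (by simp)
  refine ⟨Sum.elim f fun _ => t, hf.sum_elim le_comap_addVee (fun _ => ht) ?_, fun _ => rfl⟩
  rintro ⟨⟩ c
  rcases hcover c with hc | hc
  · rcases mem_union.mp hc with hx | hy
    · exact ⟨Sum.inl x, Or.inr addVee_adj_left, hx⟩
    · exact ⟨Sum.inl y, Or.inr addVee_adj_right, hy⟩
  · exact ⟨Sum.inr (), Or.inl rfl, hc⟩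

/-- If `c ∈ f x ∩ f y`, split the other four colours into two 2-sets for `u` and `v`:
each of `u`, `v` sees both halves, and gets `c` from `x` resp. `y`. -/
theorem IsConfig.exists_extend_addPathTwo (hf : IsConfig H f) (hxy : (f x ∩ f y).Nonempty) :
    ∃ g, IsConfig (addPathTwo H x y) g ∧ ∀ a, g (Sum.inl a) = f a := by
  obtain ⟨c, hc⟩ := hxy
  obtain ⟨hcx, hcy⟩ := mem_inter.mp hc
  obtain ⟨s, t, hs, ht, hcover⟩ :=
    exists_split_of_card_eq_add (u := {c}ᶜ) (m := 2) (n := 2) (by simp [card_compl])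
  refine ⟨Sum.elim f fun b => if b then t else s,
    hf.sum_elim le_comap_addPathTwo (fun b => by cases b <;> assumption) ?_, fun _ => rfl⟩
  rintro (_ | _) d
  · by_cases hdc : d = c
    · exact ⟨Sum.inl x, Or.inr addPathTwo_adj_left, hdc ▸ hcx⟩
    rcases hcover d (by simpa using hdc) with hd | hd
    · exact ⟨Sum.inr false, Or.inl rfl, hd⟩
    · exact ⟨Sum.inr true, Or.inr addPathTwo_adj_mid.symm, hd⟩
  · by_cases hdc : d = c
    · exact ⟨Sum.inl y, Or.inr addPathTwo_adj_right.symm, hdc ▸ hcy⟩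
    rcases hcover d (by simpa using hdc) with hd | hd
    · exact ⟨Sum.inr false, Or.inr addPathTwo_adj_mid, hd⟩
    · exact ⟨Sum.inr true, Or.inl rfl, hd⟩

end Extension

theorem stmt7 {W : Type*} (H : SimpleGraph W) (f : W → Finset (Fin 5))
    (hf : IsConfig H f) :
    (∀ x y : W, f x ≠ f y →
      ∃ g, IsConfig (addVee H x y) g ∧ ∀ a : W, g (Sum.inl a) = f a) ∧
    (∀ x y : W, (f x ∩ f y).Nonempty →
      ∃ g, IsConfig (addPathTwo H x y) g ∧ ∀ a : W, g (Sum.inl a) = f a) :=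
  ⟨fun _ _ => hf.exists_extend_addVee, fun _ _ => hf.exists_extend_addPathTwo⟩
end

section
/- Let x and y be (not necessarily distinct) vertices of a configurable graph H, let C = v1v2v3v4v5v1 be a cycle of length five, and let P = u1u2...u_p and Q = w1w2...w_q be paths with p, q ∈ {1,2}, where H, C, P, Q are pairwise disjoint. Let G be the graph with V(G) = V(H) ∪ V(C) ∪ V(P) ∪ V(Q) and E(G) = E(H) ∪ E(C) ∪ E(P) ∪ E(Q) ∪ {x u1, u_p v1, y w1, w_q v3}. Then G is configurable. -/
open SimpleGraph

/-- The graph obtained from the disjoint union of `H`, a 5-cycle `C` (on `ZMod 5`,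
with `v_i` corresponding to `i - 1` and `a` adjacent to `a + 1`), a path
`P = u_1 … u_p` (on `Fin p`) and a path `Q = w_1 … w_q` (on `Fin q`) by adding the
four edges `x u_1`, `u_p v_1`, `y w_1` and `w_q v_3`. -/
def c5TwoTails {W : Type*} (H : SimpleGraph W) (x y : W) (p q : ℕ) :
    SimpleGraph (W ⊕ ZMod 5 ⊕ Fin p ⊕ Fin q) :=
  SimpleGraph.fromEdgeSet
    ({e | ∃ a b, H.Adj a b ∧ e = s(Sum.inl a, Sum.inl b)} ∪
     {e | ∃ a : ZMod 5, e = s(Sum.inr (Sum.inl a), Sum.inr (Sum.inl (a + 1)))} ∪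
     {e | ∃ i : ℕ, ∃ h : i + 1 < p,
        e = s(Sum.inr (Sum.inr (Sum.inl ⟨i, Nat.lt_of_succ_lt h⟩)),
              Sum.inr (Sum.inr (Sum.inl ⟨i + 1, h⟩)))} ∪
     {e | ∃ i : ℕ, ∃ h : i + 1 < q,
        e = s(Sum.inr (Sum.inr (Sum.inr ⟨i, Nat.lt_of_succ_lt h⟩)),
              Sum.inr (Sum.inr (Sum.inr ⟨i + 1, h⟩)))} ∪
     {e | ∃ h : 0 < p, e = s(Sum.inl x, Sum.inr (Sum.inr (Sum.inl ⟨0, h⟩)))} ∪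
     {e | ∃ h : 0 < p,
        e = s(Sum.inr (Sum.inr (Sum.inl ⟨p - 1, by omega⟩)), Sum.inr (Sum.inl 0))} ∪
     {e | ∃ h : 0 < q, e = s(Sum.inl y, Sum.inr (Sum.inr (Sum.inr ⟨0, h⟩)))} ∪
     {e | ∃ h : 0 < q,
        e = s(Sum.inr (Sum.inr (Sum.inr ⟨q - 1, by omega⟩)), Sum.inr (Sum.inl 2))})

/-! Label the 5-cycle by `i ↦ {c + 2i, c + 2i + 1}`; for every rotation `c` this configures
the cycle. A tail with one inner vertex between end labels `X ≠ Z` can be filled since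
`|X ∪ Z| ≥ 3`, and a tail with two inner vertices can be filled as soon as `X ∩ Z ≠ ∅`
(split the other four colours between them). With the labels of `x` and `y` fixed, at least
three of the five rotations suit each tail, so some rotation suits both. -/

open Finset

def cycleLabel (c : Fin 5) (i : ZMod 5) : Finset (Fin 5) :=
  {c + Fin.ofNat 5 (2 * i.val), c + Fin.ofNat 5 (2 * i.val) + 1}

lemma card_cycleLabel (c : Fin 5) (i : ZMod 5) : #(cycleLabel c i) = 2 := by
  revert c i; decide

-- The labels of `i - 1`, `i`, `i + 1` are six consecutive residues mod 5.
lemma cycleLabel_sub_one_union_union_add_one (c : Fin 5) (i : ZMod 5) :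
    cycleLabel c (i - 1) ∪ cycleLabel c i ∪ cycleLabel c (i + 1) = univ := by
  revert c i; decide

lemma four_le_card_filter_ne_cycleLabel (X : Finset (Fin 5)) (i : ZMod 5) :
    4 ≤ #{c | X ≠ cycleLabel c i} := by
  revert X i; decide

lemma three_le_card_filter_inter_cycleLabel_nonempty (X : Finset (Fin 5)) (hX : #X = 2)
    (i : ZMod 5) : 3 ≤ #{c | (X ∩ cycleLabel c i).Nonempty} := by
  revert X i; decide

/-- `s 0` and `s (p + 1)` label the end vertices of a path, `s 1, …, s p` its inner vertices. -/
def IsPathLabelling (p : ℕ) (s : ℕ → Finset (Fin 5)) : Prop :=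
  ∀ j < p, #(s (j + 1)) = 2 ∧ s j ∪ s (j + 1) ∪ s (j + 2) = univ

def Joinable (p : ℕ) (X Z : Finset (Fin 5)) : Prop :=
  ∃ s, s 0 = X ∧ s (p + 1) = Z ∧ IsPathLabelling p s

lemma joinable_one {X Z : Finset (Fin 5)} (hX : #X = 2) (hZ : #Z = 2) (hXZ : X ≠ Z) :
    Joinable 1 X Z := by
  have hunion : 3 ≤ #(X ∪ Z) := by
    have hne : Z ≠ X ∪ Z := fun h =>
      hXZ (eq_of_subset_of_card_le (union_eq_right.1 h.symm) (by rw [hX, hZ]))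
    have := card_lt_card (ssubset_of_subset_of_ne subset_union_right hne)
    omega
  obtain ⟨U, hsub, -, hU⟩ := exists_subsuperset_card_eq (n := 2)
    (subset_univ (univ \ (X ∪ Z))) (by rw [card_univ_sdiff, Fintype.card_fin]; omega) (by simp)
  refine ⟨fun | 0 => X | 1 => U | _ => Z, rfl, rfl, fun j hj => ?_⟩
  obtain rfl : j = 0 := by omega
  refine ⟨hU, univ_subset_iff.1 ?_⟩
  show univ ⊆ X ∪ U ∪ Z
  rw [union_right_comm]
  exact sdiff_le_iff.1 hsub

lemma joinable_two {X Z : Finset (Fin 5)} (hXZ : (X ∩ Z).Nonempty) : Joinable 2 X Z := by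
  obtain ⟨a, ha⟩ := hXZ
  rw [mem_inter] at ha
  obtain ⟨U, hU, hUcard⟩ := exists_subset_card_eq (s := univ.erase a) (n := 2) (by simp)
  have hVcard : #((univ.erase a) \ U) = 2 := by simp [card_sdiff_of_subset hU, hUcard]
  have hcover {T : Finset (Fin 5)} (haT : a ∈ T) : T ∪ (U ∪ (univ.erase a) \ U) = univ := by
    rw [union_sdiff_of_subset hU, union_erase_of_mem haT]
    exact univ_subset_iff.1 subset_union_right
  refine ⟨fun | 0 => X | 1 => U | 2 => (univ.erase a) \ U | _ => Z, rfl, rfl, fun j hj => ?_⟩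
  interval_cases j
  · exact ⟨hUcard, by rw [union_assoc]; exact hcover ha.1⟩
  · exact ⟨hVcard, by rw [union_comm]; exact hcover ha.2⟩

open Classical in
lemma three_le_card_filter_joinable_cycleLabel {p : ℕ} (hp : p = 1 ∨ p = 2)
    {X : Finset (Fin 5)} (hX : #X = 2) (i : ZMod 5) :
    3 ≤ #{c | Joinable p X (cycleLabel c i)} := by
  rcases hp with rfl | rfl
  · calc 3 ≤ #{c | X ≠ cycleLabel c i} := by
          have := four_le_card_filter_ne_cycleLabel X i
          omega
      _ ≤ _ := card_le_card <| monotone_filter_right _ fun c _ =>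
          joinable_one hX (card_cycleLabel c i)
  · calc 3 ≤ #{c | (X ∩ cycleLabel c i).Nonempty} :=
          three_le_card_filter_inter_cycleLabel_nonempty X hX i
      _ ≤ _ := card_le_card <| monotone_filter_right _ fun c _ => joinable_two

lemma exists_joinable_cycleLabel_zero_two {p q : ℕ} (hp : p = 1 ∨ p = 2) (hq : q = 1 ∨ q = 2)
    {X Y : Finset (Fin 5)} (hX : #X = 2) (hY : #Y = 2) :
    ∃ c, Joinable p X (cycleLabel c 0) ∧ Joinable q Y (cycleLabel c 2) := by
  classical
  obtain ⟨c, hc⟩ := inter_nonempty_of_card_lt_card_add_card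
    (filter_subset (fun c => Joinable p X (cycleLabel c 0)) univ)
    (filter_subset (fun c => Joinable q Y (cycleLabel c 2)) univ) <| by
      have := three_le_card_filter_joinable_cycleLabel hp hX 0
      have := three_le_card_filter_joinable_cycleLabel hq hY 2
      rw [card_univ, Fintype.card_fin]
      omega
  simp only [mem_inter, mem_filter, mem_univ, true_and] at hc
  exact ⟨c, hc⟩

lemma exists_adj_mem_of_union_eq_univ {V : Type*} {G : SimpleGraph V} {F : V → Finset (Fin 5)}
    {a v b : V} (ha : G.Adj a v) (hb : G.Adj b v) (h : F a ∪ F v ∪ F b = univ) (col : Fin 5) :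
    ∃ u, (u = v ∨ G.Adj u v) ∧ col ∈ F u := by
  have hcol : col ∈ F a ∪ F v ∪ F b := h ▸ mem_univ col
  simp only [mem_union] at hcol
  rcases hcol with (hcol | hcol) | hcol
  exacts [⟨a, .inr ha, hcol⟩, ⟨v, .inl rfl, hcol⟩, ⟨b, .inr hb, hcol⟩]

lemma IsPathLabelling.exists_adj_mem {V : Type*} {G : SimpleGraph V} {F : V → Finset (Fin 5)}
    {p : ℕ} {s : ℕ → Finset (Fin 5)} (hs : IsPathLabelling p s) {a b : V} {u : Fin p → V}
    (hau : ∀ h : 0 < p, G.Adj a (u ⟨0, h⟩))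
    (hub : ∀ h : 0 < p, G.Adj (u ⟨p - 1, by omega⟩) b)
    (huu : ∀ i (h : i + 1 < p), G.Adj (u ⟨i, by omega⟩) (u ⟨i + 1, h⟩))
    (ha : F a = s 0) (hb : F b = s (p + 1)) (hu : ∀ j, F (u j) = s (j + 1))
    (j : Fin p) (col : Fin 5) :
    ∃ w, (w = u j ∨ G.Adj w (u j)) ∧ col ∈ F w := by
  obtain ⟨j, hj⟩ := j
  have hleft : ∃ w, G.Adj w (u ⟨j, hj⟩) ∧ F w = s j := by
    cases j with
    | zero => exact ⟨a, hau hj, ha⟩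
    | succ i => exact ⟨u ⟨i, by omega⟩, huu i hj, hu _⟩
  have hright : ∃ w, G.Adj w (u ⟨j, hj⟩) ∧ F w = s (j + 2) := by
    by_cases h : j + 1 < p
    · exact ⟨u ⟨j + 1, h⟩, (huu j h).symm, hu _⟩
    · obtain rfl : j = p - 1 := by omega
      exact ⟨b, (hub (by omega)).symm, by rw [hb]; congr 1; omega⟩
  obtain ⟨w₁, hw₁, hF₁⟩ := hleft
  obtain ⟨w₂, hw₂, hF₂⟩ := hright
  have hcover : F w₁ ∪ F (u ⟨j, hj⟩) ∪ F w₂ = univ := by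
    rw [hF₁, hu, hF₂]
    exact (hs j hj).2
  exact exists_adj_mem_of_union_eq_univ hw₁ hw₂ hcover col

section c5TwoTails

variable {W : Type*} {H : SimpleGraph W} {x y : W} {p q : ℕ}

lemma c5TwoTails_adj_inl {a b : W} (h : H.Adj a b) :
    (c5TwoTails H x y p q).Adj (.inl a) (.inl b) := by
  simp [c5TwoTails, h, h.ne, and_or_left, exists_or]

lemma c5TwoTails_adj_cycle (a : ZMod 5) :
    (c5TwoTails H x y p q).Adj (.inr (.inl a)) (.inr (.inl (a + 1))) := by
  simp [c5TwoTails, show (1 : ZMod 5) ≠ 0 by decide]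

lemma c5TwoTails_adj_tailP (i : ℕ) (h : i + 1 < p) :
    (c5TwoTails H x y p q).Adj (.inr (.inr (.inl ⟨i, by omega⟩)))
      (.inr (.inr (.inl ⟨i + 1, h⟩))) := by
  simp [c5TwoTails, h, and_or_left, exists_or]

lemma c5TwoTails_adj_x_tailP (h : 0 < p) :
    (c5TwoTails H x y p q).Adj (.inl x) (.inr (.inr (.inl ⟨0, h⟩))) := by
  simp [c5TwoTails, h]

lemma c5TwoTails_adj_tailP_cycle (h : 0 < p) :
    (c5TwoTails H x y p q).Adj (.inr (.inr (.inl ⟨p - 1, by omega⟩))) (.inr (.inl 0)) := by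
  simp [c5TwoTails, h]

lemma c5TwoTails_adj_tailQ (i : ℕ) (h : i + 1 < q) :
    (c5TwoTails H x y p q).Adj (.inr (.inr (.inr ⟨i, by omega⟩)))
      (.inr (.inr (.inr ⟨i + 1, h⟩))) := by
  simp [c5TwoTails, h, and_or_left, exists_or]

lemma c5TwoTails_adj_y_tailQ (h : 0 < q) :
    (c5TwoTails H x y p q).Adj (.inl y) (.inr (.inr (.inr ⟨0, h⟩))) := by
  simp [c5TwoTails, h]

lemma c5TwoTails_adj_tailQ_cycle (h : 0 < q) :
    (c5TwoTails H x y p q).Adj (.inr (.inr (.inr ⟨q - 1, by omega⟩))) (.inr (.inl 2)) := by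
  simp [c5TwoTails, h]

theorem configurable_c5TwoTails_of_joinable {f : W → Finset (Fin 5)} (hf : IsConfig H f)
    {c : Fin 5} (hx : Joinable p (f x) (cycleLabel c 0)) (hy : Joinable q (f y) (cycleLabel c 2)) :
    Configurable (c5TwoTails H x y p q) := by
  obtain ⟨s, hs0, hsp, hs⟩ := hx
  obtain ⟨t, ht0, htq, ht⟩ := hy
  set F : W ⊕ ZMod 5 ⊕ Fin p ⊕ Fin q → Finset (Fin 5) := Sum.elim f (Sum.elim (cycleLabel c)
    (Sum.elim (fun j => s (j + 1)) fun k => t (k + 1)))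
  refine ⟨F, ?_, ?_⟩
  · rintro (w | i | j | k)
    exacts [hf.1 w, card_cycleLabel c i, (hs j j.2).1, (ht k k.2).1]
  · rintro (w | i | j | k) col
    · obtain ⟨u, hu, hcol⟩ := hf.2 w col
      exact ⟨.inl u, hu.imp (congrArg _) c5TwoTails_adj_inl, hcol⟩
    · have hprev : (c5TwoTails H x y p q).Adj (.inr (.inl (i - 1))) (.inr (.inl i)) :=
        by simpa only [sub_add_cancel] using c5TwoTails_adj_cycle (i - 1)
      exact exists_adj_mem_of_union_eq_univ hprev (c5TwoTails_adj_cycle i).symm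
        (cycleLabel_sub_one_union_union_add_one c i) col
    · exact hs.exists_adj_mem (F := F) (u := fun j => .inr (.inr (.inl j)))
        c5TwoTails_adj_x_tailP c5TwoTails_adj_tailP_cycle c5TwoTails_adj_tailP
        hs0.symm hsp.symm (fun _ => rfl) j col
    · exact ht.exists_adj_mem (F := F) (u := fun k => .inr (.inr (.inr k)))
        c5TwoTails_adj_y_tailQ c5TwoTails_adj_tailQ_cycle c5TwoTails_adj_tailQ
        ht0.symm htq.symm (fun _ => rfl) k col

end c5TwoTails

theorem stmt9 {W : Type*} (H : SimpleGraph W) (hH : Configurable H) (x y : W)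
    (p q : ℕ) (hp : p = 1 ∨ p = 2) (hq : q = 1 ∨ q = 2) :
    Configurable (c5TwoTails H x y p q) := by
  obtain ⟨f, hf⟩ := hH
  obtain ⟨c, hx, hy⟩ := exists_joinable_cycleLabel_zero_two hp hq (hf.1 x) (hf.1 y)
  exact configurable_c5TwoTails_of_joinable hf hx hy
end

section
/- Let H_1 and H_2 be disjoint graphs, let P be a path with at least one vertex, and let v_1 ∈ V(H_1) and v_2 ∈ V(H_2). Let G be the graph formed by taking the disjoint union of H_1, H_2 and P and identifying the first vertex of P with v_1 and the last vertex of P with v_2. Suppose f_1 : V(H_1) → [5]² and f_2 : V(H_2) → [5]² are functions such that, for i = 1, 2, every vertex of H_i except possibly v_i is satisfied with respect to f_i (in H_i). If |⋃_{u ∈ N(v_1)} f_1(u)| ≥ 4 and |⋃_{u ∈ N(v_2)} f_2(u)| ≥ 3 (neighborhoods taken in H_1 and H_2 respectively), then G is configurable. -/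
/-!
Colour the `i`-th vertex of the path with the pair `{2i, 2i + 1}` of residues mod 5. A path vertex
then sees its own pair, `2i + 2` at its successor and `2i + 3, 2i + 4` at its predecessor, so only
the two ends need help. Permuting colours keeps every vertex of `Hᵢ` satisfied, so `f₁` may be
permuted to make `f₁(v₁) = {0, 1}` and to turn two further colours seen by `N(v₁)` into `3, 4`,
which stand in for the missing predecessor of the first path vertex; likewise `f₂` is permuted to
make `f₂(v₂)` the pair of the last path vertex and a colour seen by `N(v₂)` outside `f₂(v₂)` the
one its missing successor would supply.
-/

open SimpleGraph

open Function Finset Equiv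

theorem exists_perm_map_eq_and_subset_map {α : Type*} [Fintype α] [DecidableEq α]
    {S A S' D : Finset α} (hS : #S = #S') (hSD : Disjoint S' D) (hD : #D ≤ #(A \ S)) :
    ∃ σ : Perm α, S.map σ.toEmbedding = S' ∧ D ⊆ A.map σ.toEmbedding := by
  obtain ⟨A₀, hA₀, hA₀D⟩ := exists_subset_card_eq hD
  have hSA₀ : Disjoint S A₀ := disjoint_of_subset_right hA₀ disjoint_sdiff
  let e : (S ∪ A₀ : Finset α) ≃ (S' ∪ D : Finset α) :=
    (Equiv.Finset.union S A₀ hSA₀).symm.trans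
      (((S.equivOfCardEq hS).sumCongr (A₀.equivOfCardEq hA₀D)).trans
        (Equiv.Finset.union S' D hSD))
  refine ⟨e.extendSubtype, eq_of_subset_of_card_le (fun y hy => ?_) (by simp [hS]),
    fun d hd => ?_⟩
  · obtain ⟨x, hx, rfl⟩ := mem_map.1 hy
    simp [e, extendSubtype_apply_of_mem _ _ (mem_union_left A₀ hx), hx]
  · let x := (A₀.equivOfCardEq hA₀D).symm ⟨d, hd⟩
    refine mem_map.2 ⟨x, (mem_sdiff.1 (hA₀ x.2)).1, ?_⟩
    simp [e, x, extendSubtype_apply_of_mem _ _ (mem_union_right S x.2)]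

theorem exists_extend_of_compat {α β γ W R : Type*} [Nonempty R] {e₁ : α → W} {e₂ : β → W}
    {e₃ : γ → W} (he₁ : Injective e₁) (he₂ : Injective e₂) (he₃ : Injective e₃)
    {g₁ : α → R} {g₂ : β → R} {g₃ : γ → R} (h₁₂ : ∀ a b, e₁ a = e₂ b → g₁ a = g₂ b)
    (h₁₃ : ∀ a c, e₁ a = e₃ c → g₁ a = g₃ c) (h₂₃ : ∀ b c, e₂ b = e₃ c → g₂ b = g₃ c) :
    ∃ f : W → R, (∀ a, f (e₁ a) = g₁ a) ∧ (∀ b, f (e₂ b) = g₂ b) ∧ ∀ c, f (e₃ c) = g₃ c := by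
  refine ⟨extend e₁ g₁ (extend e₂ g₂ (extend e₃ g₃ fun _ => Classical.arbitrary R)),
    he₁.extend_apply _ _, fun b => ?_, fun c => ?_⟩
  · by_cases h₁ : ∃ a, e₁ a = e₂ b
    · obtain ⟨a, ha⟩ := h₁
      rw [← ha, he₁.extend_apply, h₁₂ a b ha]
    · rw [extend_apply' _ _ _ h₁, he₂.extend_apply]
  · by_cases h₁ : ∃ a, e₁ a = e₃ c
    · obtain ⟨a, ha⟩ := h₁
      rw [← ha, he₁.extend_apply, h₁₃ a c ha]
    by_cases h₂ : ∃ b, e₂ b = e₃ c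
    · obtain ⟨b, hb⟩ := h₂
      rw [extend_apply' _ _ _ h₁, ← hb, he₂.extend_apply, h₂₃ b c hb]
    · rw [extend_apply' _ _ _ h₁, extend_apply' _ _ _ h₂, he₃.extend_apply]

def relabel {V α : Type*} (σ : Perm α) (f : V → Finset α) (v : V) : Finset α :=
  (f v).map σ.toEmbedding

@[simp]
theorem card_relabel {V α : Type*} (σ : Perm α) (f : V → Finset α) (v : V) :
    #(relabel σ f v) = #(f v) :=
  card_map _

def cyclicPair (x : Fin 5) : Finset (Fin 5) := {x, x + 1}

theorem card_cyclicPair (x : Fin 5) : #(cyclicPair x) = 2 := by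
  revert x; decide

theorem disjoint_cyclicPair_add_two (x : Fin 5) : Disjoint (cyclicPair x) {x + 2} := by
  revert x; decide

theorem mem_of_notMem_cyclicPair {x c : Fin 5} (hc : c ∉ cyclicPair x) :
    c = x + 2 ∨ c ∈ ({x + 3, x + 4} : Finset (Fin 5)) := by
  revert x c; decide

theorem add_two_add_three_add_four_subset_cyclicPair (x : Fin 5) :
    ({x + 2 + 3, x + 2 + 4} : Finset (Fin 5)) ⊆ cyclicPair x := by
  revert x; decide

namespace SimpleGraph

section Satisfied

variable {V W α : Type*} {G : SimpleGraph V} {H : SimpleGraph W} {f : V → Finset α} {v : V}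

def Satisfied (G : SimpleGraph V) (f : V → Finset α) (v : V) : Prop :=
  ∀ c, ∃ u, (u = v ∨ G.Adj u v) ∧ c ∈ f u

def SeesColor (G : SimpleGraph V) (f : V → Finset α) (v : V) (c : α) : Prop :=
  ∃ u, G.Adj u v ∧ c ∈ f u

theorem Satisfied.relabel (σ : Perm α) (h : G.Satisfied f v) :
    G.Satisfied (_root_.relabel σ f) v := fun c =>
  let ⟨u, hu, hc⟩ := h (σ.symm c)
  ⟨u, hu, mem_map_equiv.2 hc⟩

theorem SeesColor.relabel (σ : Perm α) {c : α} (h : G.SeesColor f v (σ.symm c)) :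
    G.SeesColor (_root_.relabel σ f) v c :=
  let ⟨u, hu, hc⟩ := h
  ⟨u, hu, mem_map_equiv.2 hc⟩

theorem Satisfied.map (φ : G →g H) {g : W → Finset α} (hfg : ∀ u, g (φ u) = f u)
    (h : G.Satisfied f v) : H.Satisfied g (φ v) := fun c =>
  let ⟨u, hu, hc⟩ := h c
  ⟨φ u, hu.imp (congrArg φ) φ.map_adj, hfg u ▸ hc⟩

theorem SeesColor.map (φ : G →g H) {g : W → Finset α} (hfg : ∀ u, g (φ u) = f u) {c : α}
    (h : G.SeesColor f v c) : H.SeesColor g (φ v) c :=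
  let ⟨u, hu, hc⟩ := h
  ⟨φ u, φ.map_adj hu, hfg u ▸ hc⟩

theorem Satisfied.of_seesColor (h : ∀ c ∉ f v, G.SeesColor f v c) : G.Satisfied f v := by
  intro c
  by_cases hc : c ∈ f v
  · exact ⟨v, .inl rfl, hc⟩
  · obtain ⟨u, hu, hcu⟩ := h c hc
    exact ⟨u, .inr hu, hcu⟩

theorem exists_relabel_eq_and_seesColor [Fintype α] {S D : Finset α}
    (hS : #(f v) = #S) (hSD : Disjoint S D)
    (hD : #(f v) + #D ≤ (⋃ u ∈ G.neighborSet v, (f u : Set α)).ncard) :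
    ∃ σ : Perm α, _root_.relabel σ f v = S ∧
      ∀ c ∈ D, G.SeesColor (_root_.relabel σ f) v c := by
  classical
  set N := ⋃ u ∈ G.neighborSet v, (f u : Set α)
  obtain ⟨σ, hσS, hσD⟩ := exists_perm_map_eq_and_subset_map (A := N.toFinset) hS hSD
    (by grw [← le_card_sdiff, ← Set.ncard_eq_toFinset_card']; omega)
  refine ⟨σ, hσS, fun c hc => SeesColor.relabel σ ?_⟩
  have hcN := mem_map_equiv.1 (hσD hc)
  simp only [Set.mem_toFinset, N, Set.mem_iUnion, mem_neighborSet, mem_coe] at hcN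
  obtain ⟨u, hu, hcu⟩ := hcN
  exact ⟨u, hu.symm, hcu⟩

end Satisfied

def pathGraphHomOfAdjSucc {W : Type*} {G : SimpleGraph W} {p : ℕ} (ψ : Fin p → W)
    (h : ∀ i (hi : i + 1 < p), G.Adj (ψ ⟨i, Nat.lt_of_succ_lt hi⟩) (ψ ⟨i + 1, hi⟩)) :
    pathGraph p →g G where
  toFun := ψ
  map_rel' {i j} hij := by
    rcases pathGraph_adj.1 hij with hj | hi
    · convert h i (hj ▸ j.2) using 2
      exact Fin.ext hj.symm
    · convert (h j (hi ▸ i.2)).symm using 2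
      exact Fin.ext hi.symm

variable {V : Type*} {G : SimpleGraph V} {f : V → Finset (Fin 5)} {n : ℕ}

theorem Satisfied.of_cyclicPair {v : V} {x : Fin 5} (hv : f v = cyclicPair x)
    (h₂ : G.SeesColor f v (x + 2))
    (h₃₄ : ∀ c ∈ ({x + 3, x + 4} : Finset (Fin 5)), G.SeesColor f v c) : G.Satisfied f v :=
  Satisfied.of_seesColor fun c hc => by
    rcases mem_of_notMem_cyclicPair (hv ▸ hc) with rfl | hc
    exacts [h₂, h₃₄ c hc]

theorem seesColor_path_add_two (ψ : pathGraph (n + 1) →g G)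
    (hψ : ∀ i, f (ψ i) = cyclicPair ((i : ℕ) • 2))
    (hlast : G.SeesColor f (ψ (Fin.last n)) (n • 2 + 2)) (i : Fin (n + 1)) :
    G.SeesColor f (ψ i) ((i : ℕ) • 2 + 2) := by
  induction i using Fin.lastCases with
  | last => simpa using hlast
  | cast j =>
    refine ⟨ψ j.succ, ψ.map_adj (pathGraph_adj.2 (.inr rfl)), ?_⟩
    simp [hψ, cyclicPair, succ_nsmul]

theorem seesColor_path_add_three_add_four (ψ : pathGraph (n + 1) →g G)
    (hψ : ∀ i, f (ψ i) = cyclicPair ((i : ℕ) • 2))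
    (hfirst : ∀ c ∈ ({3, 4} : Finset (Fin 5)), G.SeesColor f (ψ 0) c) (i : Fin (n + 1)) :
    ∀ c ∈ ({(i : ℕ) • 2 + 3, (i : ℕ) • 2 + 4} : Finset (Fin 5)), G.SeesColor f (ψ i) c := by
  induction i using Fin.cases with
  | zero => simpa using hfirst
  | succ j =>
    intro c hc
    refine ⟨ψ j.castSucc, ψ.map_adj (pathGraph_adj.2 (.inl rfl)), ?_⟩
    rw [hψ]
    apply add_two_add_three_add_four_subset_cyclicPair
    simpa [succ_nsmul] using hc

theorem satisfied_path (ψ : pathGraph (n + 1) →g G)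
    (hψ : ∀ i, f (ψ i) = cyclicPair ((i : ℕ) • 2))
    (hfirst : ∀ c ∈ ({3, 4} : Finset (Fin 5)), G.SeesColor f (ψ 0) c)
    (hlast : G.SeesColor f (ψ (Fin.last n)) (n • 2 + 2)) (i : Fin (n + 1)) :
    G.Satisfied f (ψ i) :=
  .of_cyclicPair (hψ i) (seesColor_path_add_two ψ hψ hlast i)
    (seesColor_path_add_three_add_four ψ hψ hfirst i)

end SimpleGraph

/-- Gluing lemma: `G` is obtained from the disjoint union of `H₁`, `H₂` and a path
`P` on `p ≥ 1` vertices by identifying the first vertex of `P` with `v₁ ∈ V(H₁)`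
and the last vertex of `P` with `v₂ ∈ V(H₂)`. The copies of `H₁`, `H₂`, `P` inside
`G` are described by injections `φ₁`, `φ₂`, `ψ` which overlap exactly as the
identifications require. If `fᵢ` satisfies every vertex of `Hᵢ` except possibly
`vᵢ`, the open neighborhood of `v₁` sees at least 4 colors, and the open
neighborhood of `v₂` sees at least 3 colors, then `G` is configurable. -/
theorem stmt14 {V1 V2 W : Type*} (H1 : SimpleGraph V1) (H2 : SimpleGraph V2)
    (G : SimpleGraph W) (v1 : V1) (v2 : V2) (p : ℕ) (hp : 1 ≤ p)
    (φ1 : V1 → W) (φ2 : V2 → W) (ψ : Fin p → W)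
    (hφ1 : Function.Injective φ1) (hφ2 : Function.Injective φ2)
    (hψ : Function.Injective ψ)
    (hcover : ∀ w : W, (∃ a, w = φ1 a) ∨ (∃ b, w = φ2 b) ∨ (∃ i, w = ψ i))
    (hend1 : ψ ⟨0, by omega⟩ = φ1 v1)
    (hend2 : ψ ⟨p - 1, by omega⟩ = φ2 v2)
    (hsep12 : ∀ a b, φ1 a = φ2 b → a = v1 ∧ b = v2 ∧ p = 1)
    (hsep1 : ∀ a i, φ1 a = ψ i → a = v1 ∧ (i : ℕ) = 0)
    (hsep2 : ∀ b i, φ2 b = ψ i → b = v2 ∧ (i : ℕ) = p - 1)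
    (hadj : ∀ w w', G.Adj w w' ↔
      (∃ a b, H1.Adj a b ∧ w = φ1 a ∧ w' = φ1 b) ∨
      (∃ a b, H2.Adj a b ∧ w = φ2 a ∧ w' = φ2 b) ∨
      (∃ i : ℕ, ∃ h : i + 1 < p,
        (w = ψ ⟨i, Nat.lt_of_succ_lt h⟩ ∧ w' = ψ ⟨i + 1, h⟩) ∨
        (w' = ψ ⟨i, Nat.lt_of_succ_lt h⟩ ∧ w = ψ ⟨i + 1, h⟩)))
    (f1 : V1 → Finset (Fin 5)) (f2 : V2 → Finset (Fin 5))
    (hf1card : ∀ a, (f1 a).card = 2) (hf2card : ∀ b, (f2 b).card = 2)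
    (hf1sat : ∀ a, a ≠ v1 → ∀ c : Fin 5, ∃ u, (u = a ∨ H1.Adj u a) ∧ c ∈ f1 u)
    (hf2sat : ∀ b, b ≠ v2 → ∀ c : Fin 5, ∃ u, (u = b ∨ H2.Adj u b) ∧ c ∈ f2 u)
    (hbig1 : 4 ≤ (⋃ u ∈ H1.neighborSet v1, (↑(f1 u) : Set (Fin 5))).ncard)
    (hbig2 : 3 ≤ (⋃ u ∈ H2.neighborSet v2, (↑(f2 u) : Set (Fin 5))).ncard) :
    Configurable G := by
  obtain ⟨n, rfl⟩ : ∃ n, p = n + 1 := ⟨p - 1, by omega⟩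
  let φ1' : H1 →g G := ⟨φ1, fun h => (hadj _ _).2 (.inl ⟨_, _, h, rfl, rfl⟩)⟩
  let φ2' : H2 →g G := ⟨φ2, fun h => (hadj _ _).2 (.inr (.inl ⟨_, _, h, rfl, rfl⟩))⟩
  let ψ' : pathGraph (n + 1) →g G := pathGraphHomOfAdjSucc ψ fun i h =>
    (hadj _ _).2 (.inr (.inr ⟨i, h, .inl ⟨rfl, rfl⟩⟩))
  have hψ'0 : ψ' 0 = φ1 v1 := hend1
  have hψ'last : ψ' (Fin.last n) = φ2 v2 := hend2
  obtain ⟨σ1, hσ1, hN1⟩ := exists_relabel_eq_and_seesColor (G := H1) (v := v1)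
    (S := cyclicPair 0) (D := {3, 4}) (by rw [hf1card, card_cyclicPair]) (by decide)
    (by rw [hf1card]; exact le_trans (by decide) hbig1)
  obtain ⟨σ2, hσ2, hN2⟩ := exists_relabel_eq_and_seesColor (G := H2) (v := v2)
    (S := cyclicPair (n • 2)) (D := {n • 2 + 2}) (by rw [hf2card, card_cyclicPair])
    (disjoint_cyclicPair_add_two _) (by rw [hf2card, card_singleton]; exact hbig2)
  obtain ⟨f, hf1, hf2, hfψ⟩ := exists_extend_of_compat hφ1 hφ2 hψ
    (g₁ := relabel σ1 f1) (g₂ := relabel σ2 f2) (g₃ := fun i => cyclicPair ((i : ℕ) • 2))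
    (fun a b h => by obtain ⟨rfl, rfl, hn⟩ := hsep12 a b h; simp [hσ1, hσ2, show n = 0 by omega])
    (fun a i h => by obtain ⟨rfl, hi⟩ := hsep1 a i h; simp [hσ1, hi])
    (fun b i h => by obtain ⟨rfl, hi⟩ := hsep2 b i h; simp [hσ2, hi])
  have hpath := satisfied_path ψ' hfψ (fun c hc => hψ'0 ▸ (hN1 c hc).map φ1' hf1)
    (hψ'last ▸ (hN2 _ (mem_singleton_self _)).map φ2' hf2)
  refine ⟨f, fun w => ?_, fun w c => ?_⟩
  · rcases hcover w with ⟨a, rfl⟩ | ⟨b, rfl⟩ | ⟨i, rfl⟩ <;>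
      simp only [hf1, hf2, hfψ, card_relabel, hf1card, hf2card, card_cyclicPair]
  · rcases hcover w with ⟨a, rfl⟩ | ⟨b, rfl⟩ | ⟨i, rfl⟩
    · by_cases ha : a = v1
      · rw [ha, ← hψ'0]; exact hpath 0 c
      · exact (Satisfied.relabel σ1 (hf1sat a ha)).map φ1' hf1 c
    · by_cases hb : b = v2
      · rw [hb, ← hψ'last]; exact hpath (Fin.last n) c
      · exact (Satisfied.relabel σ2 (hf2sat b hb)).map φ2' hf2 c
    · exact hpath i c
end

section
/- Let G be a graph and v a vertex of G. If G is isomorphic to C_4, then there exists a function f : V(G) → [5]² such that every vertex of G other than v is satisfied and |⋃_{u ∈ N[v]} f(u)| ≥ 3. If G is isomorphic to C_7, C_4·C_4 or K_{2,3}, then there exists a function f : V(G) → [5]² such that every vertex of G other than v is satisfied and |⋃_{u ∈ N[v]} f(u)| ≥ 4. -/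
open SimpleGraph

/-- The graph `C₄·C₄`: two 4-cycles sharing exactly one vertex (the vertex `0`). -/
def C4C4 : SimpleGraph (Fin 7) :=
  SimpleGraph.fromEdgeSet {s(0,1), s(1,2), s(2,3), s(3,0), s(0,4), s(4,5), s(5,6), s(6,0)}

/-- The set of colors seen by the closed neighborhood of `v` under `f`. -/
def closedNbhdColors {V : Type*} (G : SimpleGraph V) (f : V → Finset (Fin 5)) (v : V) :
    Set (Fin 5) :=
  (↑(f v) : Set (Fin 5)) ∪ ⋃ u ∈ G.neighborSet v, (↑(f u) : Set (Fin 5))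

/-!
All four graphs are fixed finite graphs, and the conclusion transfers along graph isomorphisms,
so it suffices to exhibit, for each vertex `t` of the model graph, an assignment of colour pairs
that satisfies every vertex except `t` and shows `t` enough colours; `decide` checks each one.
On the cycles, which are vertex-transitive, one assignment rotated around the cycle serves for all
`t`.
-/

def SatisfiesExcept {V : Type*} (G : SimpleGraph V) (v : V) (k : ℕ) (f : V → Finset (Fin 5)) :
    Prop :=
  (∀ u, (f u).card = 2) ∧ (∀ u, u ≠ v → ∀ c : Fin 5, ∃ w, (w = u ∨ G.Adj w u) ∧ c ∈ f w) ∧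
    k ≤ (closedNbhdColors G f v).ncard

section Iso

variable {V W : Type*} {G : SimpleGraph V} {H : SimpleGraph W}

lemma closedNbhdColors_comp_iso (e : G ≃g H) (g : W → Finset (Fin 5)) (v : V) :
    closedNbhdColors G (g ∘ e) v = closedNbhdColors H g (e v) := by
  ext c
  simp only [closedNbhdColors, Set.mem_union, Set.mem_iUnion, mem_neighborSet, Finset.mem_coe,
    Function.comp_apply, exists_prop]
  refine or_congr_right ⟨fun ⟨u, hu, hc⟩ => ⟨e u, e.map_adj_iff.mpr hu, hc⟩, fun ⟨w, hw, hc⟩ => ?_⟩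
  exact ⟨e.symm w, by simpa using e.symm.map_adj_iff.mpr hw, by simpa using hc⟩

lemma SatisfiesExcept.comp_iso (e : G ≃g H) {v : V} {k : ℕ} {g : W → Finset (Fin 5)}
    (hg : SatisfiesExcept H (e v) k g) : SatisfiesExcept G v k (g ∘ e) := by
  obtain ⟨hcard, hsat, hk⟩ := hg
  refine ⟨fun u => hcard (e u), fun u hu c => ?_, closedNbhdColors_comp_iso e g v ▸ hk⟩
  obtain ⟨w, hw, hc⟩ := hsat (e u) (e.injective.ne hu) c
  refine ⟨e.symm w, ?_, by simpa using hc⟩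
  rcases hw with rfl | hw
  · exact .inl (e.symm_apply_apply u)
  · exact .inr (by simpa using e.symm.map_adj_iff.mpr hw)

lemma exists_satisfiesExcept_of_iso (h : Nonempty (G ≃g H)) (v : V) {k : ℕ}
    (hH : ∀ t, ∃ g, SatisfiesExcept H t k g) : ∃ f, SatisfiesExcept G v k f :=
  let ⟨e⟩ := h
  let ⟨g, hg⟩ := hH (e v)
  ⟨g ∘ e, hg.comp_iso e⟩

end Iso

section Decide

variable {W : Type*} [Fintype W] (H : SimpleGraph W) [DecidableRel H.Adj]

lemma ncard_closedNbhdColors (g : W → Finset (Fin 5)) (t : W) :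
    (closedNbhdColors H g t).ncard = (g t ∪ ({u | H.Adj t u} : Finset W).biUnion g).card := by
  rw [← Set.ncard_coe_finset]
  congr 1
  ext c
  simp [closedNbhdColors, mem_neighborSet]

lemma satisfiesExcept_iff (t : W) (k : ℕ) (g : W → Finset (Fin 5)) :
    SatisfiesExcept H t k g ↔ (∀ u, (g u).card = 2) ∧
      (∀ u, u ≠ t → ∀ c : Fin 5, ∃ w, (w = u ∨ H.Adj w u) ∧ c ∈ g w) ∧
      k ≤ (g t ∪ ({u | H.Adj t u} : Finset W).biUnion g).card := by
  rw [SatisfiesExcept, ncard_closedNbhdColors]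

instance [DecidableEq W] (t : W) (k : ℕ) (g : W → Finset (Fin 5)) :
    Decidable (SatisfiesExcept H t k g) :=
  decidable_of_iff' _ (satisfiesExcept_iff H t k g)

end Decide

instance : DecidableRel C4C4.Adj :=
  inferInstanceAs (DecidableRel (fromEdgeSet _).Adj)

instance : DecidableRel (completeBipartiteGraph (Fin 2) (Fin 3)).Adj :=
  fun _ _ => inferInstanceAs (Decidable (_ ∨ _))

lemma cycleGraph_four_exists_satisfiesExcept (t : Fin 4) :
    ∃ f, SatisfiesExcept (cycleGraph 4) t 3 f :=
  ⟨fun u => ![{0, 1}, {0, 2}, {3, 4}, {1, 2}] (u - t), by revert t; decide⟩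

lemma cycleGraph_seven_exists_satisfiesExcept (t : Fin 7) :
    ∃ f, SatisfiesExcept (cycleGraph 7) t 4 f :=
  ⟨fun u => ![{0, 1}, {0, 2}, {3, 4}, {1, 2}, {0, 1}, {3, 4}, {2, 3}] (u - t),
    by revert t; decide⟩

-- Entry `t` of the table is the assignment used when `t` is the exceptional vertex.
lemma C4C4_exists_satisfiesExcept (t : Fin 7) : ∃ f, SatisfiesExcept C4C4 t 4 f :=
  ⟨![![{0, 1}, {0, 2}, {3, 4}, {1, 2}, {0, 3}, {2, 4}, {1, 3}],
     ![{0, 1}, {0, 1}, {2, 3}, {2, 4}, {0, 3}, {2, 4}, {1, 3}],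
     ![{0, 1}, {0, 2}, {3, 4}, {2, 3}, {0, 4}, {2, 3}, {1, 4}],
     ![{0, 1}, {0, 2}, {3, 4}, {1, 3}, {0, 4}, {2, 3}, {1, 4}],
     ![{0, 1}, {0, 2}, {3, 4}, {1, 2}, {0, 1}, {2, 3}, {3, 4}],
     ![{0, 1}, {0, 2}, {3, 4}, {1, 2}, {0, 3}, {2, 4}, {3, 4}],
     ![{0, 1}, {0, 2}, {3, 4}, {1, 2}, {0, 3}, {2, 4}, {1, 4}]] t, by revert t; decide⟩

lemma completeBipartiteGraph_two_three_exists_satisfiesExcept (t : Fin 2 ⊕ Fin 3) :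
    ∃ f, SatisfiesExcept (completeBipartiteGraph (Fin 2) (Fin 3)) t 4 f :=
  ⟨Sum.elim ![{0, 1}, {2, 3}]
    (Sum.elim ![![{0, 4}, {1, 4}, {2, 4}], ![{0, 4}, {2, 4}, {3, 4}]]
      ![![{0, 1}, {2, 4}, {3, 4}], ![{0, 4}, {1, 2}, {3, 4}], ![{0, 4}, {1, 4}, {2, 3}]] t),
    by revert t; decide⟩

theorem stmt15 {V : Type*} (G : SimpleGraph V) (v : V) :
    (Nonempty (G ≃g cycleGraph 4) →
      ∃ f : V → Finset (Fin 5), (∀ u, (f u).card = 2) ∧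
        (∀ u, u ≠ v → ∀ c : Fin 5, ∃ w, (w = u ∨ G.Adj w u) ∧ c ∈ f w) ∧
        3 ≤ (closedNbhdColors G f v).ncard) ∧
    ((Nonempty (G ≃g cycleGraph 7) ∨ Nonempty (G ≃g C4C4) ∨
        Nonempty (G ≃g completeBipartiteGraph (Fin 2) (Fin 3))) →
      ∃ f : V → Finset (Fin 5), (∀ u, (f u).card = 2) ∧
        (∀ u, u ≠ v → ∀ c : Fin 5, ∃ w, (w = u ∨ G.Adj w u) ∧ c ∈ f w) ∧
        4 ≤ (closedNbhdColors G f v).ncard) := by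
  refine ⟨fun h => exists_satisfiesExcept_of_iso h v cycleGraph_four_exists_satisfiesExcept, ?_⟩
  rintro (h | h | h)
  · exact exists_satisfiesExcept_of_iso h v cycleGraph_seven_exists_satisfiesExcept
  · exact exists_satisfiesExcept_of_iso h v C4C4_exists_satisfiesExcept
  · exact exists_satisfiesExcept_of_iso h v completeBipartiteGraph_two_three_exists_satisfiesExcept
end

section
/- Let a and b be two distinct elements of a 5-element set T, and let H be the following graph. The vertices of H are: the elements of T; a vertex u_S for each 2-element subset S of T; and, for each 2-element subset S = {x,y} of T other than {a,b}, two vertices v_{S,x} and v_{S,y}. The edges of H are: x u_S and y u_S for every 2-element subset S = {x,y} of T; and, for every 2-element subset S = {x,y} of T other than {a,b}, the edges x v_{S,x}, v_{S,x} v_{S,y} and v_{S,y} y. Then H is not configurable (and H has maximum degree eight, hence contains no induced K_{1,9}). -/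
open SimpleGraph

/-- The vertices `v_{S,x}`: pairs of a 2-element subset `S ≠ {a,b}` of `T` together
with a marked element `x ∈ S`. -/
abbrev PairVert (T : Type*) [DecidableEq T] (a b : T) :=
  {p : Finset T × T // p.1.card = 2 ∧ p.2 ∈ p.1 ∧ p.1 ≠ ({a, b} : Finset T)}

/-- The vertex set of the counterexample: the elements of `T`, the vertices `u_S`
for 2-element subsets `S` of `T`, and the vertices `v_{S,x}`. -/
abbrev CounterVert (T : Type*) [DecidableEq T] (a b : T) :=
  T ⊕ ({S : Finset T // S.card = 2} ⊕ PairVert T a b)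

/-- The base relation generating the edges: `x — u_S` whenever `x ∈ S`,
`x — v_{S,x}` for every marked pair, and `v_{S,x} — v_{S,y}` for the two marked
versions of the same `S`. -/
def counterRel (T : Type*) [DecidableEq T] (a b : T) :
    CounterVert T a b → CounterVert T a b → Prop
  | Sum.inl x, Sum.inr (Sum.inl S) => x ∈ S.val
  | Sum.inl x, Sum.inr (Sum.inr v) => v.val.2 = x
  | Sum.inr (Sum.inr v), Sum.inr (Sum.inr v') => v.val.1 = v'.val.1 ∧ v.val.2 ≠ v'.val.2
  | _, _ => False

/-- The counterexample graph `H`. -/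
def counterGraph (T : Type*) [DecidableEq T] (a b : T) :
    SimpleGraph (CounterVert T a b) :=
  SimpleGraph.fromRel (counterRel T a b)

set_option maxRecDepth 40000 in
set_option synthInstance.maxSize 2000 in
set_option maxHeartbeats 2000000 in
lemma four_inter' : ∀ A B C D : {S : Finset (Fin 5) // S.card = 2},
    (A ≠ B ∧ A ≠ C ∧ A ≠ D ∧ B ≠ C ∧ B ≠ D ∧ C ≠ D) →
    ((A.1 ∩ B.1).Nonempty ∧ (A.1 ∩ C.1).Nonempty ∧ (A.1 ∩ D.1).Nonempty ∧
    (B.1 ∩ C.1).Nonempty ∧ (B.1 ∩ D.1).Nonempty ∧ (C.1 ∩ D.1).Nonempty) →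
    ∃ x, x ∈ A.1 ∧ x ∈ B.1 ∧ x ∈ C.1 ∧ x ∈ D.1 := by decide

section Helpers

variable {T : Type*} [DecidableEq T] {a b : T}

lemma cover_uS {f : CounterVert T a b → Finset (Fin 5)}
    (hcov : ∀ (v : CounterVert T a b) (c : Fin 5),
      ∃ u, (u = v ∨ (counterGraph T a b).Adj u v) ∧ c ∈ f u)
    (S : {S : Finset T // S.card = 2}) (c : Fin 5) :
    c ∈ f (Sum.inr (Sum.inl S)) ∨ ∃ x ∈ S.1, c ∈ f (Sum.inl x) := by
  obtain ⟨u, hu, hc⟩ := hcov (Sum.inr (Sum.inl S)) c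
  rcases hu with rfl | hadj
  · exact Or.inl hc
  · rcases u with z | S' | w
    · simp only [counterGraph, counterRel, SimpleGraph.fromRel_adj] at hadj
      exact Or.inr ⟨z, by tauto, hc⟩
    · simp [counterGraph, counterRel] at hadj
    · simp [counterGraph, counterRel] at hadj

lemma cover_w {f : CounterVert T a b → Finset (Fin 5)}
    (hcov : ∀ (v : CounterVert T a b) (c : Fin 5),
      ∃ u, (u = v ∨ (counterGraph T a b).Adj u v) ∧ c ∈ f u)
    (w : PairVert T a b) (c : Fin 5) :
    c ∈ f (Sum.inr (Sum.inr w)) ∨ c ∈ f (Sum.inl w.1.2) ∨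
      ∃ w' : PairVert T a b, w'.1.1 = w.1.1 ∧ w'.1.2 ≠ w.1.2 ∧
        c ∈ f (Sum.inr (Sum.inr w')) := by
  obtain ⟨u, hu, hc⟩ := hcov (Sum.inr (Sum.inr w)) c
  rcases hu with rfl | hadj
  · exact Or.inl hc
  · rcases u with z | S' | w'
    · simp only [counterGraph, counterRel, SimpleGraph.fromRel_adj] at hadj
      have hz : w.1.2 = z := by tauto
      exact Or.inr (Or.inl (hz ▸ hc))
    · simp [counterGraph, counterRel] at hadj
    · simp only [counterGraph, counterRel, SimpleGraph.fromRel_adj] at hadj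
      rcases hadj with ⟨-, h | h⟩
      · exact Or.inr (Or.inr ⟨w', h.1, h.2, hc⟩)
      · exact Or.inr (Or.inr ⟨w', h.1.symm, fun he => h.2 he.symm, hc⟩)

/-- The two gadget vertices for a pair `{x,y} ≠ {a,b}`. -/
lemma pair_inter {f : CounterVert T a b → Finset (Fin 5)}
    (hcard : ∀ v, (f v).card = 2)
    (hcov : ∀ (v : CounterVert T a b) (c : Fin 5),
      ∃ u, (u = v ∨ (counterGraph T a b).Adj u v) ∧ c ∈ f u)
    {x y : T} (hxy : x ≠ y) (hSab : ({x, y} : Finset T) ≠ {a, b}) :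
    ∃ c, c ∈ f (Sum.inl x) ∧ c ∈ f (Sum.inl y) := by
  have hx : x ∈ ({x, y} : Finset T) := by simp
  have hy : y ∈ ({x, y} : Finset T) := by simp
  set w1 : PairVert T a b := ⟨({x, y}, x), Finset.card_pair hxy, hx, hSab⟩ with hw1
  set w2 : PairVert T a b := ⟨({x, y}, y), Finset.card_pair hxy, hy, hSab⟩ with hw2
  -- find a color outside f w1 ∪ f w2
  obtain ⟨c, hc⟩ : ∃ c : Fin 5, c ∉ f (Sum.inr (Sum.inr w1)) ∪ f (Sum.inr (Sum.inr w2)) := by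
    by_contra h
    push_neg at h
    have hsub : (Finset.univ : Finset (Fin 5)) ⊆ _ := fun c _ => h c
    have := Finset.card_le_card hsub
    have h4 : (f (Sum.inr (Sum.inr w1)) ∪ f (Sum.inr (Sum.inr w2))).card ≤ 4 := by
      calc _ ≤ _ := Finset.card_union_le _ _
        _ ≤ 4 := by rw [hcard, hcard]
    simp [Finset.card_univ] at this
    omega
  rw [Finset.mem_union] at hc
  push_neg at hc
  -- the unique "other" gadget vertex for w1 is w2 and vice versa
  have key : ∀ (w w' : PairVert T a b), w.1.1 = ({x, y} : Finset T) →
      ∀ wo : PairVert T a b, wo.1.1 = w.1.1 → wo.1.2 ≠ w.1.2 → w'.1.1 = ({x,y} : Finset T) →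
      w'.1.2 ≠ w.1.2 → wo = w' := by
    intro w w' hwS wo hoS ho2 hw'S hw'2
    have h1 : wo.1.2 ∈ ({x, y} : Finset T) := by
      have := wo.2.2.1; rwa [hoS, hwS] at this
    have h2 : w'.1.2 ∈ ({x, y} : Finset T) := by
      have := w'.2.2.1; rwa [hw'S] at this
    have hw2' : w.1.2 ∈ ({x, y} : Finset T) := by
      have := w.2.2.1; rwa [hwS] at this
    simp only [Finset.mem_insert, Finset.mem_singleton] at h1 h2 hw2'
    apply Subtype.ext
    apply Prod.ext
    · rw [hoS, hwS, hw'S]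
    · show wo.1.2 = w'.1.2
      rcases hw2' with hw | hw
      · have h1' : wo.1.2 = y := h1.resolve_left (by rw [hw] at ho2; exact ho2)
        have h2' : w'.1.2 = y := h2.resolve_left (by rw [hw] at hw'2; exact hw'2)
        rw [h1', h2']
      · have h1' : wo.1.2 = x := h1.resolve_right (by rw [hw] at ho2; exact ho2)
        have h2' : w'.1.2 = x := h2.resolve_right (by rw [hw] at hw'2; exact hw'2)
        rw [h1', h2']
  have hcx : c ∈ f (Sum.inl x) := by
    rcases cover_w hcov w1 c with h | h | ⟨w', hS, h2, hcw⟩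
    · exact absurd h hc.1
    · exact h
    · have : w' = w2 := by
        refine key w1 w2 rfl w' hS h2 rfl ?_
        show y ≠ x
        exact hxy.symm
      rw [this] at hcw
      exact absurd hcw hc.2
  have hcy : c ∈ f (Sum.inl y) := by
    rcases cover_w hcov w2 c with h | h | ⟨w', hS, h2, hcw⟩
    · exact absurd h hc.2
    · exact h
    · have : w' = w1 := by
        refine key w2 w1 rfl w' hS h2 rfl ?_
        exact hxy
      rw [this] at hcw
      exact absurd hcw hc.1
  exact ⟨c, hcx, hcy⟩

lemma pair_distinct {f : CounterVert T a b → Finset (Fin 5)}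
    (hcard : ∀ v, (f v).card = 2)
    (hcov : ∀ (v : CounterVert T a b) (c : Fin 5),
      ∃ u, (u = v ∨ (counterGraph T a b).Adj u v) ∧ c ∈ f u)
    {x y : T} (hxy : x ≠ y) : f (Sum.inl x) ≠ f (Sum.inl y) := by
  intro heq
  set S : {S : Finset T // S.card = 2} := ⟨{x, y}, Finset.card_pair hxy⟩ with hS
  have hsub : (Finset.univ : Finset (Fin 5)) ⊆
      f (Sum.inr (Sum.inl S)) ∪ f (Sum.inl x) := by
    intro c _
    rcases cover_uS hcov S c with h | ⟨z, hz, h⟩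
    · exact Finset.mem_union_left _ h
    · simp only [hS, Finset.mem_insert, Finset.mem_singleton] at hz
      rcases hz with rfl | rfl
      · exact Finset.mem_union_right _ h
      · exact Finset.mem_union_right _ (heq ▸ h)
  have := Finset.card_le_card hsub
  have h4 : (f (Sum.inr (Sum.inl S)) ∪ f (Sum.inl x)).card ≤ 4 := by
    calc _ ≤ _ := Finset.card_union_le _ _
      _ ≤ 4 := by rw [hcard, hcard]
  simp [Finset.card_univ] at this
  omega

end Helpers

theorem stmt17 (T : Type*) [DecidableEq T] [Fintype T] (hT : Fintype.card T = 5)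
    (a b : T) (hab : a ≠ b) :
    ¬ Configurable (counterGraph T a b) ∧
    (∀ v, ((counterGraph T a b).neighborSet v).ncard ≤ 8) ∧
    IsEmpty (completeBipartiteGraph (Fin 1) (Fin 9) ↪g counterGraph T a b) := by
  have hdeg : ∀ v, ((counterGraph T a b).neighborSet v).ncard ≤ 8 := by
    intro v
    rcases v with x | S | w
    · -- vertex `x ∈ T`
      set F : CounterVert T a b → Finset T ⊕ Finset T := fun u =>
        match u with
        | Sum.inl _ => Sum.inl ∅
        | Sum.inr (Sum.inl S) => Sum.inl (S.1.erase x)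
        | Sum.inr (Sum.inr w) => Sum.inr (w.1.1.erase x) with hF
      set tF : Finset (Finset T ⊕ Finset T) :=
        ((Finset.univ.erase x).powersetCard 1).image Sum.inl ∪
        ((Finset.univ.erase x).powersetCard 1).image Sum.inr with htF
      have hmap : ∀ u ∈ (counterGraph T a b).neighborSet (Sum.inl x), F u ∈ (↑tF : Set _) := by
        intro u hu
        rw [SimpleGraph.mem_neighborSet] at hu
        rcases u with z | S | w
        · simp [counterGraph, counterRel] at hu
        · simp only [counterGraph, counterRel, SimpleGraph.fromRel_adj] at hu
          have hx : x ∈ S.1 := by tauto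
          simp only [htF, Finset.coe_union, Set.mem_union, Finset.coe_image, Set.mem_image]
          left
          refine ⟨S.1.erase x, ?_, rfl⟩
          simp only [Finset.mem_coe, Finset.mem_powersetCard]
          exact ⟨Finset.erase_subset_erase x (Finset.subset_univ _),
            by rw [Finset.card_erase_of_mem hx, S.2]⟩
        · simp only [counterGraph, counterRel, SimpleGraph.fromRel_adj] at hu
          have hx : w.1.2 = x := by tauto
          have hxw : x ∈ w.1.1 := hx ▸ w.2.2.1
          simp only [htF, Finset.coe_union, Set.mem_union, Finset.coe_image, Set.mem_image]
          right
          refine ⟨w.1.1.erase x, ?_, rfl⟩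
          simp only [Finset.mem_coe, Finset.mem_powersetCard]
          exact ⟨Finset.erase_subset_erase x (Finset.subset_univ _),
            by rw [Finset.card_erase_of_mem hxw, w.2.1]⟩
      have hinj : Set.InjOn F ((counterGraph T a b).neighborSet (Sum.inl x)) := by
        intro u1 h1 u2 h2 heq
        rw [SimpleGraph.mem_neighborSet] at h1 h2
        rcases u1 with z1 | S1 | w1 <;> rcases u2 with z2 | S2 | w2
        · simp [counterGraph, counterRel] at h1
        · simp [counterGraph, counterRel] at h1
        · simp [counterGraph, counterRel] at h1
        · simp [counterGraph, counterRel] at h2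
        · simp only [hF, Sum.inl.injEq] at heq
          simp only [counterGraph, counterRel, SimpleGraph.fromRel_adj] at h1 h2
          have hx1 : x ∈ S1.1 := by tauto
          have hx2 : x ∈ S2.1 := by tauto
          have : S1.1 = S2.1 := by
            rw [← Finset.insert_erase hx1, ← Finset.insert_erase hx2, heq]
          rw [Subtype.ext this]
        · simp only [hF] at heq; exact absurd heq (by simp)
        · simp [counterGraph, counterRel] at h2
        · simp only [hF] at heq; exact absurd heq (by simp)
        · simp only [hF, Sum.inr.injEq] at heq
          simp only [counterGraph, counterRel, SimpleGraph.fromRel_adj] at h1 h2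
          have hx1 : w1.1.2 = x := by tauto
          have hx2 : w2.1.2 = x := by tauto
          have hm1 : x ∈ w1.1.1 := hx1 ▸ w1.2.2.1
          have hm2 : x ∈ w2.1.1 := hx2 ▸ w2.2.2.1
          have h11 : w1.1.1 = w2.1.1 := by
            rw [← Finset.insert_erase hm1, ← Finset.insert_erase hm2, heq]
          have : w1 = w2 := Subtype.ext (Prod.ext h11 (hx1.trans hx2.symm))
          rw [this]
      have := Set.ncard_le_ncard_of_injOn F hmap hinj (tF.finite_toSet)
      refine le_trans this ?_
      rw [Set.ncard_coe_finset]
      refine le_trans (Finset.card_union_le _ _) ?_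
      have hc : ((Finset.univ.erase x).powersetCard 1).card = 4 := by
        rw [Finset.card_powersetCard, Finset.card_erase_of_mem (Finset.mem_univ x),
          Finset.card_univ, hT, Nat.choose_one_right]
      have h1 := Finset.card_image_le (s := (Finset.univ.erase x).powersetCard 1)
        (f := (Sum.inl : Finset T → Finset T ⊕ Finset T))
      have h2 := Finset.card_image_le (s := (Finset.univ.erase x).powersetCard 1)
        (f := (Sum.inr : Finset T → Finset T ⊕ Finset T))
      omega
    · -- vertex `u_S`
      have hsub : (counterGraph T a b).neighborSet (Sum.inr (Sum.inl S)) ⊆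
          (Sum.inl : T → CounterVert T a b) '' (↑S.1 : Set T) := by
        intro u hu
        rw [SimpleGraph.mem_neighborSet] at hu
        rcases u with z | S' | w
        · simp only [counterGraph, counterRel, SimpleGraph.fromRel_adj] at hu
          have : z ∈ S.1 := by tauto
          exact ⟨z, this, rfl⟩
        · simp [counterGraph, counterRel] at hu
        · simp [counterGraph, counterRel] at hu
      have hfin : ((Sum.inl : T → CounterVert T a b) '' (↑S.1 : Set T)).Finite := (S.1.finite_toSet).image _
      refine le_trans (Set.ncard_le_ncard hsub hfin) ?_
      rw [Set.ncard_image_of_injective _ Sum.inl_injective, Set.ncard_coe_finset, S.2]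
      omega
    · -- vertex `v_{S,x}`
      set F : CounterVert T a b → T ⊕ T := fun u =>
        match u with
        | Sum.inl z => Sum.inl z
        | Sum.inr (Sum.inl _) => Sum.inl w.1.2
        | Sum.inr (Sum.inr w') => Sum.inr w'.1.2 with hF
      set tF : Finset (T ⊕ T) := {Sum.inl w.1.2} ∪ w.1.1.image Sum.inr with htF
      have hmap : ∀ u ∈ (counterGraph T a b).neighborSet (Sum.inr (Sum.inr w)),
          F u ∈ (↑tF : Set _) := by
        intro u hu
        rw [SimpleGraph.mem_neighborSet] at hu
        rcases u with z | S' | w'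
        · simp only [counterGraph, counterRel, SimpleGraph.fromRel_adj] at hu
          have hz : w.1.2 = z := by tauto
          simp [htF, hF, hz.symm]
        · simp [counterGraph, counterRel] at hu
        · simp only [counterGraph, counterRel, SimpleGraph.fromRel_adj] at hu
          have h11 : w'.1.1 = w.1.1 := by
            rcases hu with ⟨-, h | h⟩
            · exact h.1.symm
            · exact h.1
          have : w'.1.2 ∈ w.1.1 := h11 ▸ w'.2.2.1
          simp only [htF, hF, Finset.coe_union, Set.mem_union]
          right
          simp only [Finset.coe_image, Set.mem_image, Finset.mem_coe]
          exact ⟨w'.1.2, this, rfl⟩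
      have hinj : Set.InjOn F ((counterGraph T a b).neighborSet (Sum.inr (Sum.inr w))) := by
        intro u1 h1 u2 h2 heq
        rw [SimpleGraph.mem_neighborSet] at h1 h2
        rcases u1 with z1 | S1 | w1 <;> rcases u2 with z2 | S2 | w2
        · simp only [hF, Sum.inl.injEq] at heq; rw [heq]
        · simp [counterGraph, counterRel] at h2
        · simp only [hF] at heq; exact absurd heq (by simp)
        · simp [counterGraph, counterRel] at h1
        · simp [counterGraph, counterRel] at h1
        · simp [counterGraph, counterRel] at h1
        · simp only [hF] at heq; exact absurd heq (by simp)
        · simp [counterGraph, counterRel] at h2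
        · simp only [hF, Sum.inr.injEq] at heq
          simp only [counterGraph, counterRel, SimpleGraph.fromRel_adj] at h1 h2
          have ha1 : w1.1.1 = w.1.1 := by
            rcases h1 with ⟨-, h | h⟩
            · exact h.1.symm
            · exact h.1
          have ha2 : w2.1.1 = w.1.1 := by
            rcases h2 with ⟨-, h | h⟩
            · exact h.1.symm
            · exact h.1
          have : w1 = w2 := Subtype.ext (Prod.ext (ha1.trans ha2.symm) heq)
          rw [this]
      have := Set.ncard_le_ncard_of_injOn F hmap hinj (tF.finite_toSet)
      refine le_trans this ?_
      rw [Set.ncard_coe_finset]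
      refine le_trans (Finset.card_union_le _ _) ?_
      have h2 : (w.1.1.image (Sum.inr : T → T ⊕ T)).card ≤ 2 := by
        refine le_trans (Finset.card_image_le) ?_
        rw [w.2.1]
      simp only [Finset.card_singleton]
      omega
  refine ⟨?_, hdeg, ?_⟩
  · -- not configurable
    rintro ⟨f, hcard, hcov⟩
    have hdist : ∀ x y : T, x ≠ y → f (Sum.inl x) ≠ f (Sum.inl y) :=
      fun x y h => pair_distinct hcard hcov h
    have hint : ∀ x y : T, x ≠ y → x ∉ ({a, b} : Finset T) →
        (f (Sum.inl x) ∩ f (Sum.inl y)).Nonempty := by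
      intro x y h hx
      obtain ⟨c, h1, h2⟩ := pair_inter hcard hcov h
        (fun hEq => hx (hEq ▸ (by simp : x ∈ ({x, y} : Finset T))))
      exact ⟨c, Finset.mem_inter.mpr ⟨h1, h2⟩⟩
    have hR : ((Finset.univ : Finset T) \ {a, b}).card = 3 := by
      rw [Finset.card_sdiff_of_subset (Finset.subset_univ _), Finset.card_univ, hT,
        Finset.card_pair hab]
    obtain ⟨c, d, e, hcd, hce, hde, hRset⟩ := Finset.card_eq_three.mp hR
    have hc : c ∉ ({a, b} : Finset T) :=
      (Finset.mem_sdiff.mp (hRset ▸ (by simp : c ∈ ({c, d, e} : Finset T)))).2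
    have hd : d ∉ ({a, b} : Finset T) :=
      (Finset.mem_sdiff.mp (hRset ▸ (by simp : d ∈ ({c, d, e} : Finset T)))).2
    have he : e ∉ ({a, b} : Finset T) :=
      (Finset.mem_sdiff.mp (hRset ▸ (by simp : e ∈ ({c, d, e} : Finset T)))).2
    have hca : c ≠ a := fun h => hc (by simp [h])
    have hcb : c ≠ b := fun h => hc (by simp [h])
    have hda : d ≠ a := fun h => hd (by simp [h])
    have hdb : d ≠ b := fun h => hd (by simp [h])
    have hea : e ≠ a := fun h => he (by simp [h])
    have heb : e ≠ b := fun h => he (by simp [h])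
    have hdne : ∀ {x y : T}, x ≠ y →
        (⟨f (Sum.inl x), hcard _⟩ : {S : Finset (Fin 5) // S.card = 2}) ≠
        ⟨f (Sum.inl y), hcard _⟩ :=
      fun {x y} h hEq => hdist x y h (congrArg Subtype.val hEq)
    obtain ⟨x, hxc, hxd, hxe, hxa⟩ := four_inter'
      ⟨f (Sum.inl c), hcard _⟩ ⟨f (Sum.inl d), hcard _⟩
      ⟨f (Sum.inl e), hcard _⟩ ⟨f (Sum.inl a), hcard _⟩
      ⟨hdne hcd, hdne hce, hdne hca, hdne hde, hdne hda, hdne hea⟩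
      ⟨hint c d hcd hc, hint c e hce hc, hint c a hca hc,
       hint d e hde hd, hint d a hda hd, hint e a hea he⟩
    obtain ⟨y, hyc, hyd, hye, hyb⟩ := four_inter'
      ⟨f (Sum.inl c), hcard _⟩ ⟨f (Sum.inl d), hcard _⟩
      ⟨f (Sum.inl e), hcard _⟩ ⟨f (Sum.inl b), hcard _⟩
      ⟨hdne hcd, hdne hce, hdne hcb, hdne hde, hdne hdb, hdne heb⟩
      ⟨hint c d hcd hc, hint c e hce hc, hint c b hcb hc,
       hint d e hde hd, hint d b hdb hd, hint e b heb he⟩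
    by_cases hxy : x = y
    · subst hxy
      have hall : ∀ t : T, x ∈ f (Sum.inl t) := by
        intro t
        by_cases ht : t ∈ ({a, b} : Finset T)
        · simp only [Finset.mem_insert, Finset.mem_singleton] at ht
          rcases ht with rfl | rfl
          · exact hxa
          · exact hyb
        · have : t ∈ (Finset.univ : Finset T) \ {a, b} :=
            Finset.mem_sdiff.mpr ⟨Finset.mem_univ t, ht⟩
          rw [hRset] at this
          simp only [Finset.mem_insert, Finset.mem_singleton] at this
          rcases this with rfl | rfl | rfl
          · exact hxc
          · exact hxd
          · exact hxe
      set g : T → Finset (Fin 5) := fun t => (f (Sum.inl t)).erase x with hg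
      have ginj : Function.Injective g := by
        intro t t' h
        by_contra hne
        refine hdist t t' hne ?_
        rw [← Finset.insert_erase (hall t), ← Finset.insert_erase (hall t')]
        exact congrArg (insert x) h
      have hIcard : ((Finset.univ : Finset T).image g).card = 5 := by
        rw [Finset.card_image_of_injective _ ginj, Finset.card_univ, hT]
      have hIsub : (Finset.univ : Finset T).image g ⊆
          (Finset.univ.erase x).powersetCard 1 := by
        intro A hA
        obtain ⟨t, -, rfl⟩ := Finset.mem_image.mp hA
        rw [Finset.mem_powersetCard]
        exact ⟨Finset.erase_subset_erase x (Finset.subset_univ _),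
          by rw [Finset.card_erase_of_mem (hall t), hcard]⟩
      have hle := Finset.card_le_card hIsub
      rw [hIcard, Finset.card_powersetCard,
        Finset.card_erase_of_mem (Finset.mem_univ x), Finset.card_univ] at hle
      norm_num at hle
    · have h1 : ({x, y} : Finset (Fin 5)) = f (Sum.inl c) :=
        Finset.eq_of_subset_of_card_le
          (by simp [Finset.insert_subset_iff, hxc, hyc])
          (by rw [hcard, Finset.card_pair hxy])
      have h2 : ({x, y} : Finset (Fin 5)) = f (Sum.inl d) :=
        Finset.eq_of_subset_of_card_le
          (by simp [Finset.insert_subset_iff, hxd, hyd])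
          (by rw [hcard, Finset.card_pair hxy])
      exact hdist c d hcd (h1.symm.trans h2)
  · -- no K_{1,9}
    refine ⟨fun φ => ?_⟩
    set v := φ (Sum.inl 0) with hv
    have hmem : ∀ i : Fin 9, φ (Sum.inr i) ∈ (counterGraph T a b).neighborSet v := by
      intro i
      rw [SimpleGraph.mem_neighborSet]
      exact φ.map_rel_iff.mpr (by simp [completeBipartiteGraph])
    set ψ : Fin 9 → ((counterGraph T a b).neighborSet v : Set _) :=
      fun i => ⟨φ (Sum.inr i), hmem i⟩ with hψ
    have hψinj : Function.Injective ψ := by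
      intro i j h
      have := congrArg Subtype.val h
      exact Sum.inr_injective (φ.injective this)
    have h9 : 9 ≤ Nat.card ((counterGraph T a b).neighborSet v : Set _) := by
      calc (9 : ℕ) = Nat.card (Fin 9) := by simp
        _ ≤ _ := Nat.card_le_card_of_injective ψ hψinj
    rw [Nat.card_coe_set_eq] at h9
    have := hdeg v
    omega
end
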